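/- arXiv:2305.15297 — 9 statements merged into one kernel-verified Lean document; each statement's English description precedes it below -/
import Mathlib

section
/- For every graph G on n vertices, n - 2z(G) ≤ ι(G) ≤ n - z(G), where z(G) is the largest integer z such that there exist two disjoint vertex sets of size z each with no edges between them, and ι(G) is the vertex integrity of G. -/
open SimpleGraph

/-- The maximum size of a connected component of a graph. -/
noncomputable def maxCompCard {W : Type*} (H : SimpleGraph W) : ℕ :=
  sSup {m | ∃ c : H.ConnectedComponent, m = c.supp.ncard}

/-- The vertex integrity of a graph: the minimum over vertex subsets `S` of
`|S|` plus the maximum component size after deleting `S`. -/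
noncomputable def integrity {V : Type*} [Fintype V] (G : SimpleGraph V) : ℕ :=
  sInf {m | ∃ S : Finset V, m = S.card + maxCompCard (G.induce ((↑S : Set V)ᶜ))}

/-- The largest `z` such that there are two disjoint sets of `z` vertices with
no edge between them. -/
noncomputable def zParam {V : Type*} [Fintype V] (G : SimpleGraph V) : ℕ :=
  sSup {z | ∃ A B : Finset V, A.card = z ∧ B.card = z ∧ Disjoint A B ∧
    ∀ a ∈ A, ∀ b ∈ B, ¬ G.Adj a b}

lemma maxBdd {W : Type*} [Finite W] (H : SimpleGraph W) :
    BddAbove {m | ∃ c : H.ConnectedComponent, m = c.supp.ncard} := by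
  refine ⟨Nat.card W, ?_⟩
  rintro m ⟨c, rfl⟩
  simpa [Set.ncard_univ] using Set.ncard_le_ncard (Set.subset_univ c.supp) Set.finite_univ

lemma le_maxCompCard {W : Type*} [Finite W] (H : SimpleGraph W) (c : H.ConnectedComponent) :
    c.supp.ncard ≤ maxCompCard H :=
  le_csSup (maxBdd H) ⟨c, rfl⟩

lemma maxCompCard_le {W : Type*} {H : SimpleGraph W} {k : ℕ}
    (h : ∀ c : H.ConnectedComponent, c.supp.ncard ≤ k) : maxCompCard H ≤ k :=
  csSup_le' (by rintro m ⟨c, rfl⟩; exact h c)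


lemma walk_stay {V : Type*} {G : SimpleGraph V} {P Q : Finset V}
    (hPQ : ∀ a ∈ P, ∀ b ∈ Q, ¬ G.Adj a b) {s : Set V}
    (hs : ∀ v : s, ↑v ∈ P ∨ ↑v ∈ Q)
    {x y : s} (w : (G.induce s).Walk x y)
    (hx : ↑x ∈ P) : ↑y ∈ P := by
  induction w with
  | nil => exact hx
  | @cons u v t h p ih =>
    apply ih
    have hadj : G.Adj ↑u ↑v := h
    rcases hs v with h' | h'
    · exact h'
    · exact absurd hadj (hPQ _ hx _ h')

lemma zBdd {V : Type*} [Fintype V] (G : SimpleGraph V) :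
    BddAbove {z | ∃ A B : Finset V, A.card = z ∧ B.card = z ∧ Disjoint A B ∧
      ∀ a ∈ A, ∀ b ∈ B, ¬ G.Adj a b} := by
  refine ⟨Fintype.card V, ?_⟩
  rintro z ⟨A, B, hA, -, -, -⟩
  rw [← hA, ← Finset.card_univ]
  exact Finset.card_le_card (Finset.subset_univ A)

lemma zNe {V : Type*} [Fintype V] (G : SimpleGraph V) :
    {z | ∃ A B : Finset V, A.card = z ∧ B.card = z ∧ Disjoint A B ∧
      ∀ a ∈ A, ∀ b ∈ B, ¬ G.Adj a b}.Nonempty :=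
  ⟨0, ∅, ∅, by simp⟩

lemma upper {V : Type*} [Fintype V] (G : SimpleGraph V) :
    integrity G ≤ Fintype.card V - zParam G := by
  classical
  obtain ⟨A, B, hA0, hB0, hd, hAB⟩ := Nat.sSup_mem (zNe G) (zBdd G)
  set z := zParam G with hz
  have hA : A.card = z := hA0
  have hB : B.card = z := hB0
  set S : Finset V := (A ∪ B)ᶜ with hSdef
  have hSc : ((↑S : Set V)ᶜ) = (↑(A ∪ B) : Set V) := by
    rw [hSdef, Finset.coe_compl, compl_compl]
  have hcard : (A ∪ B).card = 2 * z := by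
    rw [Finset.card_union_of_disjoint hd]; omega
  have h2z : 2 * z ≤ Fintype.card V := by
    rw [← hcard, ← Finset.card_univ]
    exact Finset.card_le_card (Finset.subset_univ _)
  have hle : integrity G ≤ S.card + maxCompCard (G.induce ((↑S : Set V)ᶜ)) :=
    Nat.sInf_le ⟨S, rfl⟩
  have hmax : maxCompCard (G.induce ((↑S : Set V)ᶜ)) ≤ z := by
    rw [hSc]
    apply maxCompCard_le
    intro c
    obtain ⟨v, hv⟩ := c.exists_rep
    have hvm : ↑v ∈ A ∪ B := v.2
    have hs : ∀ w : (↑(A ∪ B) : Set V), ↑w ∈ A ∨ ↑w ∈ B := by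
      intro w; exact Finset.mem_union.mp w.2
    have hsupp : ∀ P : Finset V, (↑v ∈ P) →
        (∀ {x y : ↥((↑(A ∪ B) : Set V))},
          (G.induce (↑(A ∪ B) : Set V)).Walk x y → ↑x ∈ P → ↑y ∈ P) →
        P.card = z → c.supp.ncard ≤ z := by
      intro P hvP hwalk hPz
      have hsub : Subtype.val '' c.supp ⊆ (↑P : Set V) := by
        rintro _ ⟨x, hx, rfl⟩
        have hr : (G.induce (↑(A ∪ B) : Set V)).Reachable v x := by
          have : (G.induce (↑(A ∪ B) : Set V)).connectedComponentMk x = c := hx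
          exact ConnectedComponent.exact (hv.trans this.symm)
        obtain ⟨w⟩ := hr
        exact hwalk w hvP
      calc c.supp.ncard = (Subtype.val '' c.supp).ncard :=
            (Set.ncard_image_of_injective _ Subtype.val_injective).symm
        _ ≤ (↑P : Set V).ncard := Set.ncard_le_ncard hsub (Set.toFinite _)
        _ = z := by rw [Set.ncard_coe_finset, hPz]
    have hBA : ∀ a ∈ B, ∀ b ∈ A, ¬ G.Adj a b := fun a ha b hb hab => hAB b hb a ha hab.symm
    have hs' : ∀ w : (↑(A ∪ B) : Set V), ↑w ∈ B ∨ ↑w ∈ A := fun w => (hs w).symm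
    rcases Finset.mem_union.mp hvm with h' | h'
    · exact hsupp A h' (fun w hx => walk_stay hAB hs w hx) hA
    · exact hsupp B h' (fun w hx => walk_stay hBA hs' w hx) hB
  have hScard : S.card = Fintype.card V - 2 * z := by
    rw [hSdef, Finset.card_compl, hcard]
  omega


-- balance lemma
lemma balance {W : Type*} [Fintype W] (H : SimpleGraph W) [Fintype H.ConnectedComponent]
    [DecidableEq H.ConnectedComponent]
    (s : Finset H.ConnectedComponent → ℕ)
    (hadd : ∀ P Q, Disjoint P Q → s (P ∪ Q) = s P + s Q)
    (hzero : s ∅ = 0)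
    (κ : ℕ) (hκ : ∀ c, s {c} ≤ κ) (F : Finset H.ConnectedComponent) :
    ∃ P ⊆ F, s (F \ P) ≤ s P + κ ∧ s P ≤ s (F \ P) + κ := by
  induction F using Finset.induction_on with
  | empty => exact ⟨∅, Finset.Subset.refl _, by simp [hzero]⟩
  | @insert c F hc ih =>
    obtain ⟨P, hPF, h1, h2⟩ := ih
    have hcP : c ∉ P := fun h => hc (hPF h)
    by_cases hle : s P ≤ s (F \ P)
    · have hins : insert c F \ insert c P = F \ P := by
        ext x
        simp only [Finset.mem_sdiff, Finset.mem_insert]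
        constructor
        · rintro ⟨hx1, hx2⟩
          rcases hx1 with rfl | hx1
          · exact absurd (Or.inl rfl) hx2
          · exact ⟨hx1, fun h => hx2 (Or.inr h)⟩
        · rintro ⟨hx1, hx2⟩
          exact ⟨Or.inr hx1, by rintro (rfl | h); exacts [hc hx1, hx2 h]⟩
      have hsP : s (insert c P) = s {c} + s P := by
        rw [Finset.insert_eq, hadd {c} P (Finset.disjoint_singleton_left.mpr hcP)]
      have hκc := hκ c
      exact ⟨insert c P, Finset.insert_subset_insert c hPF,
        by rw [hins, hsP]; omega, by rw [hins, hsP]; omega⟩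
    · have hcFP : c ∉ F \ P := fun h => hc (Finset.mem_sdiff.mp h).1
      have hins : insert c F \ P = insert c (F \ P) :=
        Finset.insert_sdiff_of_notMem _ hcP
      have hsP : s (insert c (F \ P)) = s {c} + s (F \ P) := by
        rw [Finset.insert_eq, hadd {c} (F \ P) (Finset.disjoint_singleton_left.mpr hcFP)]
      have hκc := hκ c
      exact ⟨P, hPF.trans (Finset.subset_insert c F),
        by rw [hins, hsP]; omega, by rw [hins, hsP]; omega⟩

lemma lower {V : Type*} [Fintype V] (G : SimpleGraph V) :
    Fintype.card V - 2 * zParam G ≤ integrity G := by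
  classical
  have hne : {m | ∃ S : Finset V, m = S.card + maxCompCard (G.induce ((↑S : Set V)ᶜ))}.Nonempty :=
    ⟨_, ∅, rfl⟩
  obtain ⟨S, hS⟩ := Nat.sInf_mem hne
  rw [← integrity] at hS
  set s0 : Set V := (↑S : Set V)ᶜ with hs0
  set H := G.induce s0 with hH
  set κ := maxCompCard H with hκdef
  haveI : Fintype ↥s0 := Fintype.ofFinite _
  haveI : Fintype H.ConnectedComponent := Fintype.ofFinite _
  set sfun : Finset H.ConnectedComponent → ℕ :=
    fun P => (Finset.univ.filter (fun w : ↥s0 => H.connectedComponentMk w ∈ P)).card with hsfun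
  have hadd : ∀ P Q, Disjoint P Q → sfun (P ∪ Q) = sfun P + sfun Q := by
    intro P Q hPQ
    rw [hsfun]
    simp only [Finset.mem_union]
    rw [Finset.filter_or, Finset.card_union_of_disjoint]
    apply Finset.disjoint_left.mpr
    intro w hw1 hw2
    simp only [Finset.mem_filter] at hw1 hw2
    exact (Finset.disjoint_left.mp hPQ hw1.2) hw2.2
  have hzero : sfun ∅ = 0 := by simp [hsfun]
  have hκc : ∀ c : H.ConnectedComponent, sfun {c} ≤ κ := by
    intro c
    have : sfun {c} = c.supp.ncard := by
      rw [hsfun]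
      simp only [Finset.mem_singleton]
      rw [Set.ncard_eq_toFinset_card']
      congr 1
      ext w
      simp [ConnectedComponent.mem_supp_iff]
    rw [this, hκdef]
    exact le_maxCompCard H c
  obtain ⟨P, -, h1, h2⟩ := balance H sfun hadd hzero κ hκc Finset.univ
  set A₀ : Finset ↥s0 := Finset.univ.filter (fun w => H.connectedComponentMk w ∈ P) with hA₀
  set B₀ : Finset ↥s0 := Finset.univ.filter (fun w => H.connectedComponentMk w ∉ P) with hB₀
  have ha : sfun P = A₀.card := rfl
  have hb : sfun (Finset.univ \ P) = B₀.card := by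
    have hfil : Finset.univ.filter (fun w : ↥s0 => H.connectedComponentMk w ∈ Finset.univ \ P)
        = B₀ := by
      rw [hB₀]
      apply Finset.filter_congr
      intro w _
      simp
    exact congrArg Finset.card hfil
  have hab : A₀.card + B₀.card = Fintype.card ↥s0 := by
    rw [hA₀, hB₀]
    exact Finset.card_filter_add_card_filter_not _
  have hm : Fintype.card ↥s0 + S.card = Fintype.card V := by
    have h1 : Fintype.card ↥s0 = Sᶜ.card := by
      rw [← Nat.card_eq_fintype_card, Nat.card_coe_set_eq, hs0, ← Finset.coe_compl,
        Set.ncard_coe_finset]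
    rw [h1, Finset.card_compl]
    have := Finset.card_le_card (Finset.subset_univ S)
    rw [Finset.card_univ] at this
    omega
  -- build the two sets
  set z₀ := min A₀.card B₀.card with hz₀
  obtain ⟨A₁, hA₁sub, hA₁card⟩ := Finset.exists_subset_card_eq (s := A₀) (min_le_left _ _)
  obtain ⟨B₁, hB₁sub, hB₁card⟩ := Finset.exists_subset_card_eq (s := B₀) (min_le_right _ _)
  set A : Finset V := A₁.image Subtype.val with hA
  set B : Finset V := B₁.image Subtype.val with hB
  have hAcard : A.card = z₀ := by
    rw [hA, Finset.card_image_of_injective _ Subtype.val_injective, hA₁card]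
  have hBcard : B.card = z₀ := by
    rw [hB, Finset.card_image_of_injective _ Subtype.val_injective, hB₁card]
  have hmemA : ∀ w ∈ A₁, H.connectedComponentMk w ∈ P := by
    intro w hw
    have := hA₁sub hw
    rw [hA₀, Finset.mem_filter] at this
    exact this.2
  have hmemB : ∀ w ∈ B₁, H.connectedComponentMk w ∉ P := by
    intro w hw
    have := hB₁sub hw
    rw [hB₀, Finset.mem_filter] at this
    exact this.2
  have hdisj : Disjoint A B := by
    rw [Finset.disjoint_left]
    intro x hxA hxB
    rw [hA, Finset.mem_image] at hxA
    rw [hB, Finset.mem_image] at hxB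
    obtain ⟨w₁, hw₁, rfl⟩ := hxA
    obtain ⟨w₂, hw₂, hww⟩ := hxB
    have : w₂ = w₁ := Subtype.val_injective hww
    subst this
    exact hmemB _ hw₂ (hmemA _ hw₁)
  have hnoedge : ∀ a ∈ A, ∀ b ∈ B, ¬ G.Adj a b := by
    intro a haA b hbB hab
    rw [hA, Finset.mem_image] at haA
    rw [hB, Finset.mem_image] at hbB
    obtain ⟨w₁, hw₁, rfl⟩ := haA
    obtain ⟨w₂, hw₂, rfl⟩ := hbB
    have hHadj : H.Adj w₁ w₂ := hab
    have : H.connectedComponentMk w₁ = H.connectedComponentMk w₂ :=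
      ConnectedComponent.sound hHadj.reachable
    exact hmemB _ hw₂ (this ▸ hmemA _ hw₁)
  have hz : z₀ ≤ zParam G := le_csSup (zBdd G) ⟨A, B, hAcard, hBcard, hdisj, hnoedge⟩
  rw [ha, hb] at h1 h2
  omega


theorem stmt0 {V : Type*} [Fintype V] (G : SimpleGraph V) :
    Fintype.card V - 2 * zParam G ≤ integrity G ∧
      integrity G ≤ Fintype.card V - zParam G := by
  exact ⟨lower G, upper G⟩
end

section
/- If a set L of lines in PG(k-1,q) satisfies the avoidance property (no codimension-2 projective subspace meets every line of L), then the union of the point sets of the lines in L is a strong blocking set in PG(k-1,q). -/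
open Projectivization

/-- The set of points of `M` lying on a subspace `H`, viewed via their spans:
the span of the points of `M` contained in `H`. -/
def projSpan {K V : Type*} [DivisionRing K] [AddCommGroup V] [Module K V]
    (M : Set (Projectivization K V)) : Submodule K V :=
  ⨆ P ∈ M, P.submodule

/-- A set of projective points is a strong blocking set if for every hyperplane `H`
(codimension-1 subspace), the points of `M` lying on `H` span `H`. -/
def IsStrongBlockingSet {K V : Type*} [DivisionRing K] [AddCommGroup V] [Module K V]
    (M : Set (Projectivization K V)) : Prop :=
  ∀ H : Submodule K V, Module.finrank K H + 1 = Module.finrank K V →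
    projSpan {P | P ∈ M ∧ P.submodule ≤ H} = H

/-- A set of lines (2-dimensional subspaces) satisfies the avoidance property if
no codimension-2 subspace meets every line of the set. -/
def AvoidanceProperty {K V : Type*} [DivisionRing K] [AddCommGroup V] [Module K V]
    (L : Set (Submodule K V)) : Prop :=
  ¬ ∃ W : Submodule K V, Module.finrank K W + 2 = Module.finrank K V ∧
      ∀ ℓ ∈ L, W ⊓ ℓ ≠ ⊥

/-!
Let `H` be a hyperplane and `S` the span of the points of the union lying in `H`. Every line
has dimension `2`, so it meets `H` in a point, which then lies in `S`. If `S` were a proper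
subspace of `H`, any codimension-2 subspace containing `S` would meet every line, contradicting
the avoidance property.
-/

open Module
open scoped LinearAlgebra.Projectivization

namespace Submodule

variable {K V : Type*}

lemma exists_le_finrank_eq [Field K] [AddCommGroup V] [Module K V] [FiniteDimensional K V]
    (S : Submodule K V) {n : ℕ} (hS : finrank K S ≤ n) (hn : n ≤ finrank K V) :
    ∃ W : Submodule K V, S ≤ W ∧ finrank K W = n := by
  induction n with
  | zero => exact ⟨⊥, (finrank_eq_zero.mp (Nat.le_zero.mp hS)).le, finrank_bot K V⟩
  | succ m ih =>
    rcases hS.lt_or_eq with hlt | heq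
    · obtain ⟨W, hSW, hW⟩ := ih (Nat.lt_succ_iff.mp hlt) (by omega)
      obtain ⟨x, hx⟩ := W.exists_of_finrank_lt (by omega)
      have hxW : x ∉ W := by simpa using hx 1 one_ne_zero
      have hx0 : x ≠ 0 := fun h => hxW (h ▸ W.zero_mem)
      refine ⟨W ⊔ K ∙ x, hSW.trans le_sup_left, ?_⟩
      have hdim := finrank_sup_add_finrank_inf_eq W (K ∙ x)
      rw [((disjoint_span_singleton' hx0).mpr hxW).eq_bot, finrank_bot,
        finrank_span_singleton hx0] at hdim
      omega
    · exact ⟨S, le_rfl, heq⟩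

lemma inf_ne_bot_of_finrank_lt_add [DivisionRing K] [AddCommGroup V] [Module K V]
    [FiniteDimensional K V] {U W : Submodule K V}
    (h : finrank K V < finrank K U + finrank K W) : U ⊓ W ≠ ⊥ := by
  intro hbot
  have hdim := finrank_sup_add_finrank_inf_eq U W
  rw [hbot, finrank_bot] at hdim
  have := (U ⊔ W).finrank_le
  omega

end Submodule

section ProjSpan

variable {K V : Type*} [DivisionRing K] [AddCommGroup V] [Module K V]

lemma Projectivization.submodule_mk_le_iff {x : V} (hx : x ≠ 0) {U : Submodule K V} :
    (mk K x hx).submodule ≤ U ↔ x ∈ U := by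
  rw [submodule_mk, Submodule.span_singleton_le_iff_mem]

lemma projSpan_le {M : Set (ℙ K V)} {H : Submodule K V} (h : ∀ P ∈ M, P.submodule ≤ H) :
    projSpan M ≤ H :=
  iSup₂_le h

lemma mem_projSpan {M : Set (ℙ K V)} {x : V} (hx : x ≠ 0) (hM : mk K x hx ∈ M) :
    x ∈ projSpan M :=
  (submodule_mk_le_iff hx).mp (le_biSup (fun P : ℙ K V => P.submodule) hM)

end ProjSpan

theorem isStrongBlockingSet_of_avoidanceProperty {K V : Type*} [Field K] [AddCommGroup V]
    [Module K V] [FiniteDimensional K V] {L : Set (Submodule K V)}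
    (hL : ∀ ℓ ∈ L, 2 ≤ finrank K ℓ) (hAv : AvoidanceProperty L) :
    IsStrongBlockingSet {P : ℙ K V | ∃ ℓ ∈ L, P.submodule ≤ ℓ} := by
  intro H hH
  set S := projSpan {P : ℙ K V | (∃ ℓ ∈ L, P.submodule ≤ ℓ) ∧ P.submodule ≤ H}
  have hSH : S ≤ H := projSpan_le fun _ hP => hP.2
  by_contra hne
  have hdim := Submodule.finrank_lt_finrank_of_lt (hSH.lt_of_ne hne)
  obtain ⟨W, hSW, hW⟩ := S.exists_le_finrank_eq (n := finrank K H - 1) (by omega) (by omega)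
  refine hAv ⟨W, by omega, fun ℓ hℓ hbot => ?_⟩
  have hℓH : ℓ ⊓ H ≠ ⊥ := Submodule.inf_ne_bot_of_finrank_lt_add (by have := hL ℓ hℓ; omega)
  obtain ⟨x, ⟨hxℓ, hxH⟩, hx0⟩ := Submodule.exists_mem_ne_zero_of_ne_bot hℓH
  have hxS : x ∈ S := mem_projSpan hx0
    ⟨⟨ℓ, hℓ, (submodule_mk_le_iff hx0).mpr hxℓ⟩, (submodule_mk_le_iff hx0).mpr hxH⟩
  have hxWℓ : x ∈ W ⊓ ℓ := ⟨hSW hxS, hxℓ⟩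
  rw [hbot] at hxWℓ
  exact hx0 hxWℓ

theorem stmt2_general {k : ℕ} (K : Type*) [Field K]
    (L : Set (Submodule K (Fin k → K))) (hL : ∀ ℓ ∈ L, Module.finrank K ℓ = 2)
    (hAv : AvoidanceProperty L) :
    IsStrongBlockingSet {P : Projectivization K (Fin k → K) | ∃ ℓ ∈ L, P.submodule ≤ ℓ} :=
  isStrongBlockingSet_of_avoidanceProperty (fun ℓ hℓ => (hL ℓ hℓ).ge) hAv

/-- If a set of lines in `PG(k-1, q)` satisfies the avoidance property, then the union
of their point sets is a strong blocking set. -/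
theorem stmt2 {q k : ℕ} (K : Type*) [Field K] [Fintype K] (hq : Fintype.card K = q)
    (L : Set (Submodule K (Fin k → K))) (hL : ∀ ℓ ∈ L, Module.finrank K ℓ = 2)
    (hAv : AvoidanceProperty L) :
    IsStrongBlockingSet {P : Projectivization K (Fin k → K) | ∃ ℓ ∈ L, P.submodule ≤ ℓ} :=
  stmt2_general K L hL hAv
end

section
/- Let M be a projective [n,k,d]_q system (a set of n points in PG(k-1,q) spanning the space, such that every hyperplane contains at most n - d of the points) and let G = (M,E) be a graph on vertex set M with vertex integrity ι(G) ≥ n - d + 1. Then the union B(M,G) of the lines ⟨P_i,P_j⟩ over edges P_iP_j ∈ E is a strong blocking set in PG(k-1,q). -/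
open Projectivization SimpleGraph

open Module in
/-- The join of two distinct projective points (1-dimensional subspaces) has dimension 2. -/
lemma aux_sup_finrank_two {K V : Type*} [Field K] [AddCommGroup V] [Module K V]
    [FiniteDimensional K V] (A B : Submodule K V) (h1 : finrank K A = 1)
    (h2 : finrank K B = 1) (hne : A ≠ B) : finrank K ↥(A ⊔ B) = 2 := by
  have hinf : A ⊓ B = ⊥ := by
    by_contra hbot
    have hlt : A ⊓ B ≤ A := inf_le_left
    have heq : A ⊓ B = A := by
      rcases eq_or_lt_of_le hlt with h | h
      · exact h
      · exfalso
        have := Submodule.finrank_lt_finrank_of_lt h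
        rw [h1] at this
        interval_cases hAB : finrank K ↥(A ⊓ B)
        · exact hbot (Submodule.finrank_eq_zero.mp hAB)
    have hAB : A ≤ B := heq ▸ inf_le_right
    exact hne (Submodule.eq_of_le_of_finrank_le hAB (h2 ▸ h1.ge))
  have := Submodule.finrank_sup_add_finrank_inf_eq A B
  rw [hinf, finrank_bot, h1, h2] at this
  omega

open Module in
/-- Any proper subspace is contained in a hyperplane. -/
lemma aux_exists_hyperplane {K V : Type*} [Field K] [AddCommGroup V] [Module K V]
    [FiniteDimensional K V] (U : Submodule K V) (h : U ≠ ⊤) :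
    ∃ H' : Submodule K V, U ≤ H' ∧ finrank K H' + 1 = finrank K V := by
  obtain ⟨f, hf0, hfU⟩ := U.exists_dual_map_eq_bot_of_lt_top (lt_top_iff_ne_top.mpr h)
    inferInstance
  refine ⟨LinearMap.ker f, fun x hx => ?_, ?_⟩
  · have : f x ∈ U.map f := ⟨x, hx, rfl⟩
    rw [hfU] at this
    exact this
  · have h1 : finrank K (LinearMap.range f) = 1 := by
      have hle : finrank K (LinearMap.range f) ≤ 1 := by
        simpa using Submodule.finrank_le (LinearMap.range f)
      have hpos : 0 < finrank K (LinearMap.range f) := by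
        rw [Module.finrank_pos_iff]
        exact (Submodule.nontrivial_iff_ne_bot).mpr
          (fun hb => hf0 (LinearMap.range_eq_bot.mp hb))
      omega
    have := LinearMap.finrank_range_add_finrank_ker f
    omega

/-- Let `M` be a projective `[n, k, d]_q` system (a spanning set of `n` points of
`PG(k-1, q)` such that every hyperplane contains at most `n - d` of them), and `G` a
graph on `M` with vertex integrity at least `n - d + 1`. Then the union of the lines
spanned by the edges of `G` is a strong blocking set of `PG(k-1, q)`. -/
theorem stmt4 {q k n d : ℕ} (K : Type*) [Field K] [Fintype K] (hq : Fintype.card K = q)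
    (P : Fin n → Projectivization K (Fin k → K)) (hinj : Function.Injective P)
    (hspan : (⨆ i, (P i).submodule) = ⊤)
    (hhyp : ∀ H : Submodule K (Fin k → K), Module.finrank K H + 1 = k →
      {i | (P i).submodule ≤ H}.ncard ≤ n - d)
    (G : SimpleGraph (Fin n)) (hι : n - d + 1 ≤ integrity G) :
    IsStrongBlockingSet {Q : Projectivization K (Fin k → K) |
      ∃ i j, G.Adj i j ∧ Q.submodule ≤ (P i).submodule ⊔ (P j).submodule} := by
  classical
  intro H hH
  have hV : Module.finrank K (Fin k → K) = k := Module.finrank_fin_fun K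
  rw [hV] at hH
  set B := {Q : Projectivization K (Fin k → K) |
      ∃ i j, G.Adj i j ∧ Q.submodule ≤ (P i).submodule ⊔ (P j).submodule} with hB
  set W := projSpan {Q | Q ∈ B ∧ Q.submodule ≤ H} with hWdef
  have hWle : W ≤ H := iSup_le fun Q => iSup_le fun hQ => hQ.2
  refine le_antisymm hWle ?_
  by_contra hcon
  have hlt : W < H := lt_of_le_not_ge hWle hcon
  have hmemW : ∀ Q : Projectivization K (Fin k → K), Q ∈ B → Q.submodule ≤ H →
      Q.submodule ≤ W := fun Q h1 h2 => le_iSup₂_of_le Q ⟨h1, h2⟩ le_rfl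
  -- every edge line meets H
  have hedge : ∀ i j, G.Adj i j → ∃ v : Fin k → K, v ≠ 0 ∧
      (K ∙ v) ≤ (P i).submodule ⊔ (P j).submodule ∧ (K ∙ v) ≤ H := by
    intro i j hadj
    have hL2 : Module.finrank K ↥((P i).submodule ⊔ (P j).submodule) = 2 :=
      aux_sup_finrank_two _ _ ((P i).finrank_submodule) ((P j).finrank_submodule)
        (fun e => hadj.ne (hinj (Projectivization.submodule_injective e)))
    have hLH : ((P i).submodule ⊔ (P j).submodule) ⊓ H ≠ ⊥ := by
      intro hbot
      have heq := Submodule.finrank_sup_add_finrank_inf_eq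
        ((P i).submodule ⊔ (P j).submodule) H
      rw [hbot, finrank_bot, hL2] at heq
      have hle := Submodule.finrank_le (((P i).submodule ⊔ (P j).submodule) ⊔ H)
      rw [hV] at hle
      omega
    obtain ⟨v, hvmem, hv0⟩ := (Submodule.ne_bot_iff _).mp hLH
    exact ⟨v, hv0, (Submodule.span_singleton_le_iff_mem v _).mpr hvmem.1,
      (Submodule.span_singleton_le_iff_mem v _).mpr hvmem.2⟩
  set S : Finset (Fin n) := Finset.univ.filter (fun i => (P i).submodule ≤ W) with hSdef
  have hmemS : ∀ i, i ∈ S ↔ (P i).submodule ≤ W := by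
    intro i; simp [hSdef]
  -- key step along edges
  have hkey : ∀ i j, G.Adj i j → i ∉ S → (P j).submodule ≤ W ⊔ (P i).submodule := by
    intro i j hadj hiS
    obtain ⟨v, hv0, hvL, hvH⟩ := hedge i j hadj
    have hvW : (K ∙ v) ≤ W := by
      have h1 : (Projectivization.mk K v hv0) ∈ B := by
        refine ⟨i, j, hadj, ?_⟩
        rw [Projectivization.submodule_mk]; exact hvL
      have := hmemW (Projectivization.mk K v hv0) h1
        (by rw [Projectivization.submodule_mk]; exact hvH)
      rwa [Projectivization.submodule_mk] at this
    have hiH : ¬ (P i).submodule ≤ H := by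
      intro hle
      exact hiS ((hmemS i).mpr (hmemW (P i) ⟨i, j, hadj, le_sup_left⟩ hle))
    have hne : (K ∙ v) ≠ (P i).submodule := fun e => hiH (e ▸ hvH)
    have hL2 : Module.finrank K ↥((P i).submodule ⊔ (P j).submodule) = 2 :=
      aux_sup_finrank_two _ _ ((P i).finrank_submodule) ((P j).finrank_submodule)
        (fun e => hadj.ne (hinj (Projectivization.submodule_injective e)))
    have h2 : Module.finrank K ↥((K ∙ v) ⊔ (P i).submodule) = 2 :=
      aux_sup_finrank_two _ _ (finrank_span_singleton hv0) ((P i).finrank_submodule) hne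
    have hsub : (K ∙ v) ⊔ (P i).submodule ≤ (P i).submodule ⊔ (P j).submodule :=
      sup_le hvL le_sup_left
    have hLeq := Submodule.eq_of_le_of_finrank_le hsub (by rw [hL2, h2])
    calc (P j).submodule ≤ (P i).submodule ⊔ (P j).submodule := le_sup_right
      _ = (K ∙ v) ⊔ (P i).submodule := hLeq.symm
      _ ≤ W ⊔ (P i).submodule := sup_le (le_sup_left.trans' hvW) le_sup_right
  -- constancy along components
  have hwalk : ∀ (a b : ↥((↑S : Set (Fin n))ᶜ)),
      (G.induce ((↑S : Set (Fin n))ᶜ)).Reachable a b →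
      W ⊔ (P ↑a).submodule = W ⊔ (P ↑b).submodule := by
    intro a b hr
    obtain ⟨p⟩ := hr
    induction p with
    | nil => rfl
    | @cons u v w h p ih =>
      have hGadj : G.Adj ↑u ↑v := h
      have huS : (↑u : Fin n) ∉ S := u.2
      have hvS : (↑v : Fin n) ∉ S := v.2
      have hstep : W ⊔ (P ↑u).submodule = W ⊔ (P ↑v).submodule :=
        le_antisymm (sup_le le_sup_left (hkey ↑v ↑u hGadj.symm hvS))
          (sup_le le_sup_left (hkey ↑u ↑v hGadj huS))
      exact hstep.trans ih
  -- bound for each component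
  have hbound : ∀ c : (G.induce ((↑S : Set (Fin n))ᶜ)).ConnectedComponent,
      S.card + c.supp.ncard ≤ n - d := by
    intro c
    induction c using SimpleGraph.ConnectedComponent.ind with
    | _ v0 =>
    have hUne : W ⊔ (P ↑v0).submodule ≠ ⊤ := by
      intro htop
      have hWlt := Submodule.finrank_lt_finrank_of_lt hlt
      have heq := Submodule.finrank_sup_add_finrank_inf_eq W (P ↑v0).submodule
      rw [htop, (P ↑v0).finrank_submodule, finrank_top, hV] at heq
      omega
    obtain ⟨H', hUH', hH'⟩ := aux_exists_hyperplane _ hUne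
    rw [hV] at hH'
    have hsubset : ((↑S : Set (Fin n)) ∪
        (Subtype.val '' ((G.induce ((↑S : Set (Fin n))ᶜ)).connectedComponentMk v0).supp))
        ⊆ {i | (P i).submodule ≤ H'} := by
      rintro i (hi | ⟨w, hw, rfl⟩)
      · exact ((hmemS i).mp hi).trans (le_sup_left.trans hUH')
      · have hr := SimpleGraph.ConnectedComponent.exact
          ((SimpleGraph.ConnectedComponent.mem_supp_iff _ _).mp hw)
        have heq := hwalk w v0 hr
        exact (le_sup_right.trans heq.le).trans hUH'
    have hdisj : Disjoint (↑S : Set (Fin n))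
        (Subtype.val '' ((G.induce ((↑S : Set (Fin n))ᶜ)).connectedComponentMk v0).supp) := by
      rw [Set.disjoint_left]
      rintro i hi ⟨w, hw, rfl⟩
      exact w.2 hi
    calc S.card + ((G.induce ((↑S : Set (Fin n))ᶜ)).connectedComponentMk v0).supp.ncard
        = ((↑S : Set (Fin n)) ∪
          (Subtype.val '' ((G.induce ((↑S : Set (Fin n))ᶜ)).connectedComponentMk v0).supp)).ncard := by
          rw [Set.ncard_union_eq hdisj (Set.toFinite _) (Set.toFinite _),
            Set.ncard_coe_finset, Set.ncard_image_of_injective _ Subtype.val_injective]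
      _ ≤ {i | (P i).submodule ≤ H'}.ncard := Set.ncard_le_ncard hsubset (Set.toFinite _)
      _ ≤ n - d := hhyp H' hH'
  -- S itself is small
  have hScard : S.card ≤ n - d := by
    have hWne : W ≠ ⊤ := fun e => hcon (e ▸ le_top)
    obtain ⟨H'', hWH'', hH''⟩ := aux_exists_hyperplane W hWne
    rw [hV] at hH''
    calc S.card = (↑S : Set (Fin n)).ncard := (Set.ncard_coe_finset S).symm
      _ ≤ {i | (P i).submodule ≤ H''}.ncard :=
          Set.ncard_le_ncard (fun i hi => ((hmemS i).mp hi).trans hWH'') (Set.toFinite _)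
      _ ≤ n - d := hhyp H'' hH''
  have hint : integrity G ≤ S.card + maxCompCard (G.induce ((↑S : Set (Fin n))ᶜ)) :=
    Nat.sInf_le ⟨S, rfl⟩
  have hmax : maxCompCard (G.induce ((↑S : Set (Fin n))ᶜ)) ≤ (n - d) - S.card := by
    apply csSup_le'
    rintro m ⟨c, rfl⟩
    have := hbound c
    omega
  omega
end

section
/- For any prime power q, every strong blocking set in PG(k-1,q) has size at least (q+1)(k-1). -/
open Projectivization

section Aux

variable {K V : Type*} [Field K] [AddCommGroup V] [Module K V]

lemma aux_submodule_le_iff (P : Projectivization K V) (W : Submodule K V) :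
    P.submodule ≤ W ↔ P.rep ∈ W := by
  rw [Projectivization.submodule_eq, Submodule.span_singleton_le_iff_mem]

lemma aux_projSpan_eq_span (S : Set (Projectivization K V)) :
    projSpan S = Submodule.span K (Projectivization.rep '' S) := by
  apply le_antisymm
  · refine iSup₂_le fun P hP => ?_
    rw [Projectivization.submodule_eq]
    exact Submodule.span_mono (Set.singleton_subset_iff.mpr ⟨P, hP, rfl⟩)
  · rw [Submodule.span_le]
    rintro x ⟨P, hP, rfl⟩
    have h1 : P.rep ∈ P.submodule := by
      rw [Projectivization.submodule_eq]
      exact Submodule.mem_span_singleton_self _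
    exact (le_iSup₂ (f := fun (P : Projectivization K V) (_ : P ∈ S) => P.submodule) P hP) h1

/-- The kernel of a functional attaining the value 1 is a hyperplane. -/
lemma aux_finrank_ker [FiniteDimensional K V] (f : V →ₗ[K] K) {x : V} (hx : f x = 1) :
    Module.finrank K (LinearMap.ker f) + 1 = Module.finrank K V := by
  have hsurj : Function.Surjective f := fun y => ⟨y • x, by simp [hx]⟩
  have h := LinearMap.finrank_range_add_finrank_ker f
  rw [LinearMap.range_eq_top.mpr hsurj, finrank_top, Module.finrank_self] at h
  omega

end Aux

/-- Every strong blocking set in `PG(k-1, q)` has size at least `(q+1)(k-1)`. -/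
theorem stmt6 {q k : ℕ} (K : Type*) [Field K] [Fintype K] (hq : Fintype.card K = q)
    (M : Set (Projectivization K (Fin k → K))) (hM : IsStrongBlockingSet M) :
    (q + 1) * (k - 1) ≤ M.ncard := by
  classical
  obtain _ | _ | k := k
  · simp
  · simp
  -- Now the dimension is `k+2 ≥ 2`.
  set V := Fin (k + 2) → K with hV
  haveI : FiniteDimensional K V := inferInstance
  have hdim : Module.finrank K V = k + 2 := by
    show Module.finrank K (Fin (k + 2) → K) = k + 2
    rw [Module.finrank_pi, Fintype.card_fin]
  -- finiteness of the projective space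
  haveI : Finite (Projectivization K V) := by
    refine Finite.of_surjective
      (fun v : {v : V // v ≠ 0} => Projectivization.mk K v.1 v.2) (fun P => ?_)
    exact ⟨⟨P.rep, P.rep_nonzero⟩, P.mk_rep⟩
  haveI : Fintype (Projectivization K V) := Fintype.ofFinite _
  -- trace Finsets
  set T : Submodule K V → Finset (Projectivization K V) :=
    fun W => Finset.univ.filter (fun P => P ∈ M ∧ P.submodule ≤ W) with hT
  set M' : Finset (Projectivization K V) := Finset.univ.filter (fun P => P ∈ M) with hM'
  have hTM' : ∀ W, T W ⊆ M' := by
    intro W P hP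
    simp only [hT, Finset.mem_filter] at hP
    simp [hM', hP.2.1]
  have hTmono : ∀ {W W' : Submodule K V}, W ≤ W' → T W ⊆ T W' := by
    intro W W' hWW' P hP
    simp only [hT, Finset.mem_filter] at hP ⊢
    exact ⟨hP.1, hP.2.1, hP.2.2.trans hWW'⟩
  -- a submodule of finrank k exists
  have hexΛ : ∃ Λ : Submodule K V, Module.finrank K Λ = k := by
    set g : Fin k → V := fun i => (Pi.basisFun K (Fin (k + 2))) (Fin.castLE (by omega) i)
      with hg
    have hgi : LinearIndependent K g :=
      (Pi.basisFun K (Fin (k + 2))).linearIndependent.comp _ (Fin.castLE_injective _)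
    exact ⟨Submodule.span K (Set.range g), by
      rw [finrank_span_eq_card hgi, Fintype.card_fin]⟩
  -- minimal codim-2 trace
  set S : Set ℕ := {n | ∃ Λ : Submodule K V, Module.finrank K Λ = k ∧ (T Λ).card = n} with hS
  have hSne : S.Nonempty := by
    obtain ⟨Λ, hΛ⟩ := hexΛ
    exact ⟨(T Λ).card, Λ, hΛ, rfl⟩
  set m : ℕ := sInf S with hm
  obtain ⟨Λ₀, hΛ₀rank, hΛ₀card⟩ : ∃ Λ : Submodule K V,
      Module.finrank K Λ = k ∧ (T Λ).card = m := Nat.sInf_mem hSne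
  have hmin : ∀ Z : Submodule K V, Module.finrank K Z = k → m ≤ (T Z).card := by
    intro Z hZ
    exact Nat.sInf_le ⟨Z, hZ, rfl⟩
  -- Claim 1 : every hyperplane trace has at least (k+1) + m points
  have claim1 : ∀ H : Submodule K V, Module.finrank K H = k + 1 →
      k + 1 + m ≤ (T H).card := by
    intro H hH
    have hHhyp : Module.finrank K H + 1 = Module.finrank K V := by rw [hH, hdim]
    have hspan : Submodule.span K
        (Projectivization.rep '' {P | P ∈ M ∧ P.submodule ≤ H}) = H := by
      rw [← aux_projSpan_eq_span]
      exact hM H hHhyp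
    set R : Set V := Projectivization.rep '' {P | P ∈ M ∧ P.submodule ≤ H} with hR
    have hRH : R ⊆ (H : Set V) := by
      rintro x ⟨P, hP, rfl⟩
      exact (aux_submodule_le_iff P H).mp hP.2
    obtain ⟨s, hsR, hspan_s, hindep⟩ := exists_linearIndependent K R
    haveI : Fintype s := (Set.toFinite s).fintype
    have hscard : s.toFinset.card = k + 1 := by
      have h := finrank_span_set_eq_card hindep
      rw [hspan_s, hspan, hH] at h
      omega
    -- a point of s
    obtain ⟨b₀, hb₀⟩ : s.Nonempty := by
      rw [← Set.toFinset_nonempty, ← Finset.card_pos, hscard]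
      omega
    have hb₀H : b₀ ∈ H := hRH (hsR hb₀)
    -- functional equal to 1 on s
    have hindep' : LinearIndepOn K id s := hindep
    set E := hindep'.extend (Set.subset_univ s) with hE
    set B : Module.Basis E K V := Module.Basis.extend hindep' with hB
    set g : V →ₗ[K] K := B.constr K (fun _ => (1 : K)) with hgdef
    have hg1 : ∀ v ∈ s, g v = 1 := by
      intro v hv
      have hvE : v ∈ E := hindep'.subset_extend _ hv
      have : B ⟨v, hvE⟩ = v := Module.Basis.extend_apply_self hindep' ⟨v, hvE⟩
      rw [← this, hgdef, Module.Basis.constr_basis]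
    have hgb₀ : g b₀ = 1 := hg1 b₀ hb₀
    -- Z := H ⊓ ker g has finrank k
    set Z : Submodule K V := H ⊓ LinearMap.ker g with hZ
    have hsup : H ⊔ LinearMap.ker g = ⊤ := by
      rw [eq_top_iff]
      intro x _
      refine Submodule.mem_sup.mpr ⟨g x • b₀, H.smul_mem _ hb₀H, x - g x • b₀, ?_, by abel⟩
      simp [LinearMap.mem_ker, map_sub, map_smul, hgb₀, smul_eq_mul]
    have hkerg : Module.finrank K (LinearMap.ker g) + 1 = k + 2 := by
      have h := aux_finrank_ker g hgb₀
      omega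
    have hZrank : Module.finrank K Z = k := by
      have h2 := Submodule.finrank_sup_add_finrank_inf_eq H (LinearMap.ker g)
      rw [hsup, finrank_top] at h2
      have hzz : Module.finrank K Z = Module.finrank K ↥(H ⊓ LinearMap.ker g) := rfl
      omega
    -- the basis points of the trace
    set A : Finset (Projectivization K V) := (T H).filter (fun P => P.rep ∈ s) with hA
    have hAcard : A.card = k + 1 := by
      rw [← hscard]
      apply Finset.card_bij (fun P _ => P.rep)
      · intro P hP
        simp only [hA, Finset.mem_filter] at hP
        simpa using hP.2
      · intro P hP P' hP' hrep
        rw [← P.mk_rep, ← P'.mk_rep]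
        simp_rw [hrep]
      · intro v hv
        have hvs : v ∈ s := by simpa using hv
        obtain ⟨P, hP, rfl⟩ := hsR hvs
        refine ⟨P, ?_, rfl⟩
        simp only [hA, hT, Finset.mem_filter]
        exact ⟨⟨Finset.mem_univ _, hP.1, hP.2⟩, hvs⟩
    have hAsub : A ⊆ T H := Finset.filter_subset _ _
    have hZsub : T Z ⊆ T H := hTmono inf_le_left
    have hdisjAZ : Disjoint A (T Z) := by
      rw [Finset.disjoint_left]
      intro P hPA hPZ
      simp only [hA, Finset.mem_filter] at hPA
      simp only [hT, Finset.mem_filter] at hPZ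
      have h0 : P.rep ∈ Z := (aux_submodule_le_iff P Z).mp hPZ.2.2
      have h1 : g P.rep = 1 := hg1 _ hPA.2
      have h2 : g P.rep = 0 := by
        have := h0.2
        simpa [LinearMap.mem_ker] using this
      rw [h1] at h2
      exact one_ne_zero h2
    calc k + 1 + m ≤ A.card + (T Z).card := by
          rw [hAcard]
          exact Nat.add_le_add_left (hmin Z hZrank) _
      _ = (A ∪ T Z).card := (Finset.card_union_of_disjoint hdisjAZ).symm
      _ ≤ (T H).card := Finset.card_le_card (Finset.union_subset hAsub hZsub)
  -- the pencil of hyperplanes through Λ₀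
  set Q := V ⧸ Λ₀ with hQ
  have hQ2 : Module.finrank K Q = 2 := by
    have h := Submodule.finrank_quotient_add_finrank Λ₀
    have hQQ : Module.finrank K Q = Module.finrank K (V ⧸ Λ₀) := rfl
    omega
  set Bq : Module.Basis (Fin 2) K Q := Module.finBasisOfFinrankEq K Q hQ2 with hBq
  set c : Fin 2 → (V →ₗ[K] K) := fun i => (Bq.coord i).comp Λ₀.mkQ with hc
  have hkerΛ : ∀ x : V, (c 0 x = 0 ∧ c 1 x = 0) ↔ x ∈ Λ₀ := by
    intro x
    have h1 : x ∈ Λ₀ ↔ Λ₀.mkQ x = 0 := by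
      rw [Submodule.mkQ_apply, Submodule.Quotient.mk_eq_zero]
    have h2 : Λ₀.mkQ x = 0 ↔ ∀ i, Bq.coord i (Λ₀.mkQ x) = 0 :=
      (Bq.forall_coord_eq_zero_iff).symm
    rw [h1, h2, Fin.forall_fin_two]
    simp only [hc, LinearMap.coe_comp, Function.comp_apply, Module.Basis.coord_apply]
  -- preimages of the basis vectors
  obtain ⟨e₀, he₀⟩ := Λ₀.mkQ_surjective (Bq 0)
  obtain ⟨e₁, he₁⟩ := Λ₀.mkQ_surjective (Bq 1)
  have hce : ∀ i j : Fin 2, c i ((![e₀, e₁]) j) = if j = i then 1 else 0 := by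
    intro i j
    fin_cases i <;> fin_cases j <;>
      simp [hc, he₀, he₁, Module.Basis.coord_apply, Module.Basis.repr_self, Finsupp.single_apply]
  -- pencil members
  set φ : Option K → (V →ₗ[K] K) := fun t =>
    match t with
    | none => c 1
    | some t => c 0 + t • c 1
    with hφ
  have hφapp : ∀ (t : K) (x : V), φ (some t) x = c 0 x + t * c 1 x := by
    intro t x
    simp [hφ]
  have hφhyp : ∀ t : Option K, Module.finrank K (LinearMap.ker (φ t)) = k + 1 := by
    intro t
    have : ∃ x : V, φ t x = 1 := by
      match t with
      | none =>
        refine ⟨e₁, ?_⟩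
        have := hce 1 1
        simpa [hφ] using this
      | some t =>
        refine ⟨e₀, ?_⟩
        rw [hφapp]
        have h00 := hce 0 0
        have h10 := hce 1 0
        simp only [Matrix.cons_val_zero] at h00 h10
        rw [h00, h10]
        simp
    obtain ⟨x, hx⟩ := this
    have h := aux_finrank_ker (φ t) hx
    rw [hdim] at h
    omega
  have hΛφ : ∀ t : Option K, Λ₀ ≤ LinearMap.ker (φ t) := by
    intro t x hx
    have h := (hkerΛ x).mpr hx
    match t with
    | none => simpa [hφ, LinearMap.mem_ker] using h.2
    | some t =>
      simp only [LinearMap.mem_ker]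
      rw [hφapp, h.1, h.2]
      ring
  -- the parts of the partition
  set A : Option K → Finset (Projectivization K V) :=
    fun t => T (LinearMap.ker (φ t)) \ T Λ₀ with hAdef
  have hAcard : ∀ t : Option K, k + 1 ≤ (A t).card := by
    intro t
    have hsub : T Λ₀ ⊆ T (LinearMap.ker (φ t)) := hTmono (hΛφ t)
    have hc : (A t).card = (T (LinearMap.ker (φ t))).card - (T Λ₀).card :=
      Finset.card_sdiff_of_subset hsub
    have h1 := claim1 (LinearMap.ker (φ t)) (hφhyp t)
    omega
  have hAdisj : ∀ t ∈ (Finset.univ : Finset (Option K)), ∀ t' ∈ Finset.univ,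
      t ≠ t' → Disjoint (A t) (A t') := by
    intro t _ t' _ hne
    rw [Finset.disjoint_left]
    intro P hP hP'
    simp only [hAdef, Finset.mem_sdiff] at hP hP'
    have hPk : P.rep ∈ LinearMap.ker (φ t) := (aux_submodule_le_iff P _).mp <| by
      have := hP.1
      simp only [hT, Finset.mem_filter] at this
      exact this.2.2
    have hPk' : P.rep ∈ LinearMap.ker (φ t') := (aux_submodule_le_iff P _).mp <| by
      have := hP'.1
      simp only [hT, Finset.mem_filter] at this
      exact this.2.2
    have hPM : P ∈ M := by
      have := hP.1
      simp only [hT, Finset.mem_filter] at this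
      exact this.2.1
    -- derive that rep P ∈ Λ₀
    have hrepΛ : P.rep ∈ Λ₀ := by
      apply (hkerΛ P.rep).mp
      simp only [LinearMap.mem_ker] at hPk hPk'
      match t, t', hne with
      | none, none, hne => exact absurd rfl hne
      | none, some t', _ =>
        have h1 : c 1 P.rep = 0 := by simpa [hφ] using hPk
        have h2 : c 0 P.rep + t' * c 1 P.rep = 0 := by rw [← hφapp]; exact hPk'
        constructor
        · rw [h1] at h2; simpa using h2
        · exact h1
      | some t, none, _ =>
        have h1 : c 1 P.rep = 0 := by simpa [hφ] using hPk'
        have h2 : c 0 P.rep + t * c 1 P.rep = 0 := by rw [← hφapp]; exact hPk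
        constructor
        · rw [h1] at h2; simpa using h2
        · exact h1
      | some t, some t', hne =>
        have h2 : c 0 P.rep + t * c 1 P.rep = 0 := by rw [← hφapp]; exact hPk
        have h2' : c 0 P.rep + t' * c 1 P.rep = 0 := by rw [← hφapp]; exact hPk'
        have htt' : (t - t') * c 1 P.rep = 0 := by ring_nf; linear_combination h2 - h2'
        have hne' : t - t' ≠ 0 := sub_ne_zero.mpr (fun h => hne (by rw [h]))
        have hc1 : c 1 P.rep = 0 := by
          rcases mul_eq_zero.mp htt' with h | h
          · exact absurd h hne'
          · exact h
        constructor
        · rw [hc1] at h2; simpa using h2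
        · exact hc1
    have : P ∈ T Λ₀ := by
      simp only [hT, Finset.mem_filter]
      exact ⟨Finset.mem_univ _, hPM, (aux_submodule_le_iff P Λ₀).mpr hrepΛ⟩
    exact hP.2 this
  -- assembling the count
  have hbiU : (Finset.univ.biUnion A).card = ∑ t : Option K, (A t).card :=
    Finset.card_biUnion hAdisj
  have hsum : (q + 1) * (k + 1) ≤ ∑ t : Option K, (A t).card := by
    calc (q + 1) * (k + 1) = ∑ _t : Option K, (k + 1) := by
          rw [Finset.sum_const, Finset.card_univ, Fintype.card_option, hq, smul_eq_mul]
      _ ≤ ∑ t : Option K, (A t).card := Finset.sum_le_sum (fun t _ => hAcard t)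
  have hsubM : Finset.univ.biUnion A ⊆ M' := by
    intro P hP
    rw [Finset.mem_biUnion] at hP
    obtain ⟨t, _, hPt⟩ := hP
    simp only [hAdef, Finset.mem_sdiff] at hPt
    exact hTM' _ hPt.1
  have hfinal : (q + 1) * (k + 1) ≤ M'.card := by
    calc (q + 1) * (k + 1) ≤ ∑ t : Option K, (A t).card := hsum
      _ = (Finset.univ.biUnion A).card := hbiU.symm
      _ ≤ M'.card := Finset.card_le_card hsubM
  have hMcoe : M = (↑M' : Set (Projectivization K V)) := by
    ext P
    simp [hM']
  rw [hMcoe, Set.ncard_coe_finset]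
  simpa using hfinal
end

section
/- Let C be a nondegenerate [n,k,d]_q linear code with generator matrix G whose columns are g_1,...,g_n ∈ F_q^k. Then C is a minimal code if and only if the set {[g_1],...,[g_n]} of projective points is a strong blocking set in PG(k-1,q). -/
open Projectivization

section Aux

variable {K V : Type*} [Field K] [AddCommGroup V] [Module K V]

/-- The linear functional `x ↦ ∑ i, u i * x i`. -/
def dpL (K : Type*) [Field K] {k : ℕ} (u : Fin k → K) : (Fin k → K) →ₗ[K] K where
  toFun x := ∑ i, u i * x i
  map_add' x y := by simp [mul_add, Finset.sum_add_distrib]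
  map_smul' c x := by simp [Finset.mul_sum, mul_left_comm]

lemma dpL_apply (K : Type*) [Field K] {k : ℕ} (u x : Fin k → K) :
    dpL K u x = ∑ i, u i * x i := rfl

lemma dpL_ne_zero (K : Type*) [Field K] {k : ℕ} {u : Fin k → K} (hu : u ≠ 0) :
    dpL K u ≠ 0 := by
  intro h
  apply hu
  funext i
  have := congrArg (fun f : (Fin k → K) →ₗ[K] K => f (fun j => if i = j then 1 else 0)) h
  simpa [dpL_apply, mul_ite, Finset.sum_ite_eq] using this

lemma exists_dpL (K : Type*) [Field K] {k : ℕ} (f : (Fin k → K) →ₗ[K] K) :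
    ∃ u : Fin k → K, f = dpL K u := by
  refine ⟨fun i => f (fun j => if i = j then 1 else 0), ?_⟩
  refine LinearMap.ext fun x => ?_
  conv_lhs => rw [pi_eq_sum_univ x]
  rw [map_sum, dpL_apply]
  exact Finset.sum_congr rfl fun i _ => by rw [map_smul, smul_eq_mul, mul_comm]

/-- The kernel of a nonzero functional is a hyperplane. -/
lemma finrank_ker_add_one [FiniteDimensional K V] {f : V →ₗ[K] K} (hf : f ≠ 0) :
    Module.finrank K (LinearMap.ker f) + 1 = Module.finrank K V := by
  obtain ⟨x, hx⟩ : ∃ x, f x ≠ 0 := by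
    by_contra h
    push_neg at h
    exact hf (LinearMap.ext fun v => by simp [h v])
  have hr : LinearMap.range f = ⊤ := by
    rw [LinearMap.range_eq_top]
    intro c
    exact ⟨(c / f x) • x, by rw [map_smul, smul_eq_mul]; field_simp⟩
  have := LinearMap.finrank_range_add_finrank_ker f
  rw [hr, finrank_top, Module.finrank_self] at this
  omega

/-- A proper subspace is annihilated by some nonzero functional. -/
lemma exists_functional_of_ne_top [FiniteDimensional K V] {T : Submodule K V} (hT : T ≠ ⊤) :
    ∃ f : V →ₗ[K] K, f ≠ 0 ∧ T ≤ LinearMap.ker f := by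
  have hlt : Module.finrank K T < Module.finrank K V :=
    Submodule.finrank_lt hT
  have hq := Submodule.finrank_quotient_add_finrank T
  have hqpos : 0 < Module.finrank K (V ⧸ T) := by omega
  let B := Module.finBasis K (V ⧸ T)
  let i0 : Fin (Module.finrank K (V ⧸ T)) := ⟨0, hqpos⟩
  refine ⟨(B.coord i0).comp T.mkQ, ?_, ?_⟩
  · intro h
    obtain ⟨y, hy⟩ := T.mkQ_surjective (B i0)
    have := congrArg (fun f : V →ₗ[K] K => f y) h
    simp only [LinearMap.comp_apply, hy, Module.Basis.coord_apply, Module.Basis.repr_self,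
      Finsupp.single_eq_same, LinearMap.zero_apply] at this
    exact one_ne_zero this
  · intro x hx
    have : T.mkQ x = 0 := (Submodule.Quotient.mk_eq_zero T).mpr hx
    simp [LinearMap.mem_ker, this]

/-- Two functionals with nested kernels are proportional. -/
lemma eq_smul_of_ker_le_ker {f g : V →ₗ[K] K} (hf : f ≠ 0)
    (h : LinearMap.ker f ≤ LinearMap.ker g) : ∃ c : K, g = c • f := by
  obtain ⟨x, hx⟩ : ∃ x, f x ≠ 0 := by
    by_contra hc
    push_neg at hc
    exact hf (LinearMap.ext fun v => by simp [hc v])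
  refine ⟨g x / f x, LinearMap.ext fun v => ?_⟩
  have hm : v - (f v / f x) • x ∈ LinearMap.ker f := by
    simp only [LinearMap.mem_ker, map_sub, map_smul, smul_eq_mul]
    field_simp; ring
  have := h hm
  simp only [LinearMap.mem_ker, map_sub, map_smul, smul_eq_mul] at this
  have hgv : g v = (f v / f x) * g x := sub_eq_zero.mp this
  simp only [LinearMap.smul_apply, smul_eq_mul]
  rw [hgv]; field_simp

end Aux

/-- Let `C` be the nondegenerate `[n, k, d]_q` code with generator matrix whose columns
are `g 1, ..., g n` (nondegeneracy saying that no column is zero, and the columns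
spanning `F_q^k` so that the code has dimension `k`); the codeword attached to
`u ∈ F_q^k` is `j ↦ ∑ i, u i * g j i`. Then `C` is a minimal code (every nonzero
codeword's support contains no support of another codeword other than its scalar
multiples) if and only if the set of projective points `{[g 1], ..., [g n]}` is a
strong blocking set in `PG(k-1, q)`. -/


theorem stmt7 {q n k d : ℕ} (K : Type*) [Field K] [Fintype K] (hq : Fintype.card K = q)
    (g : Fin n → (Fin k → K)) (hg : ∀ j, g j ≠ 0)
    (hrank : Submodule.span K (Set.range g) = ⊤)
    (hd : d = sInf {w | ∃ u : Fin k → K, u ≠ 0 ∧ w = {j | ∑ i, u i * g j i ≠ 0}.ncard}) :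
    (∀ u : Fin k → K, u ≠ 0 → ∀ u' : Fin k → K, u' ≠ 0 →
        {j | ∑ i, u' i * g j i ≠ 0} ⊆ {j | ∑ i, u i * g j i ≠ 0} →
        ∃ c : K, c ≠ 0 ∧ ∀ j, ∑ i, u' i * g j i = c * ∑ i, u i * g j i)
      ↔ IsStrongBlockingSet {P | ∃ j, P = Projectivization.mk K (g j) (hg j)} := by
  classical
  clear hd hq
  set M : Set (Projectivization K (Fin k → K)) :=
    {P | ∃ j, P = Projectivization.mk K (g j) (hg j)} with hM
  constructor
  · -- minimal → strong blocking
    intro hmin H hH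
    have hle : projSpan {P | P ∈ M ∧ P.submodule ≤ H} ≤ H := iSup₂_le fun P hP => hP.2
    refine le_antisymm hle ?_
    set S := projSpan {P | P ∈ M ∧ P.submodule ≤ H} with hS
    by_contra hcon
    have hSH : S < H := lt_of_le_of_ne hle fun h => hcon (le_of_eq h.symm)
    have hfr : Module.finrank K (Fin k → K) = k := Module.finrank_fin_fun K
    have hHne : H ≠ ⊤ := by
      intro h
      rw [h, finrank_top] at hH
      omega
    obtain ⟨w, hwH⟩ : ∃ w, w ∉ H := by
      by_contra hc; push_neg at hc
      exact hHne (Submodule.eq_top_iff'.mpr hc)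
    have hw0 : w ≠ 0 := fun h => hwH (h ▸ H.zero_mem)
    set T := S ⊔ Submodule.span K {w} with hT
    have hTne : T ≠ ⊤ := by
      intro h
      have h1 := Submodule.finrank_sup_add_finrank_inf_eq S (Submodule.span K {w})
      have h2 : Module.finrank K (Submodule.span K {w} : Submodule K (Fin k → K)) = 1 :=
        finrank_span_singleton hw0
      have h3 : Module.finrank K S < Module.finrank K H :=
        Submodule.finrank_lt_finrank_of_lt hSH
      rw [← hT, h, finrank_top, h2] at h1
      omega
    obtain ⟨f₂, hf₂0, hTf₂⟩ := exists_functional_of_ne_top hTne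
    obtain ⟨f₁, hf₁0, hHf₁⟩ := exists_functional_of_ne_top hHne
    have hkf₁ : H = LinearMap.ker f₁ := by
      apply Submodule.eq_of_le_of_finrank_le hHf₁
      have := finrank_ker_add_one hf₁0
      omega
    obtain ⟨u, hu⟩ := exists_dpL K f₁
    obtain ⟨u', hu'⟩ := exists_dpL K f₂
    have hu0 : u ≠ 0 := by
      rintro rfl
      exact hf₁0 (by rw [hu]; exact LinearMap.ext fun x => by simp [dpL_apply])
    have hu'0 : u' ≠ 0 := by
      rintro rfl
      exact hf₂0 (by rw [hu']; exact LinearMap.ext fun x => by simp [dpL_apply])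
    have hsub : {j | ∑ i, u' i * g j i ≠ 0} ⊆ {j | ∑ i, u i * g j i ≠ 0} := by
      intro j hj
      simp only [Set.mem_setOf_eq] at hj ⊢
      intro h1
      apply hj
      have hgjH : g j ∈ H := by
        rw [hkf₁, LinearMap.mem_ker, hu, dpL_apply]
        exact h1
      have hgjS : g j ∈ S := by
        have hmem : (Projectivization.mk K (g j) (hg j)) ∈ {P | P ∈ M ∧ P.submodule ≤ H} :=
          ⟨⟨j, rfl⟩, by
            rw [Projectivization.submodule_mk]
            exact (Submodule.span_singleton_le_iff_mem _ _).mpr hgjH⟩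
        have hle' : (Projectivization.mk K (g j) (hg j)).submodule ≤ S :=
          le_iSup₂ (f := fun P (_ : P ∈ {P | P ∈ M ∧ P.submodule ≤ H}) => P.submodule) _ hmem
        exact hle' (by
          rw [Projectivization.submodule_mk]
          exact Submodule.mem_span_singleton_self _)
      have : g j ∈ LinearMap.ker f₂ := hTf₂ (le_sup_left (α := Submodule K (Fin k → K)) hgjS)
      rw [LinearMap.mem_ker, hu', dpL_apply] at this
      exact this
    obtain ⟨c, hc0, hc⟩ := hmin u hu0 u' hu'0 hsub
    have hker : Submodule.span K (Set.range g) ≤ LinearMap.ker (f₂ - c • f₁) := by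
      rw [Submodule.span_le]
      rintro x ⟨j, rfl⟩
      simp only [SetLike.mem_coe, LinearMap.mem_ker, LinearMap.sub_apply, LinearMap.smul_apply,
        smul_eq_mul, hu, hu', dpL_apply, sub_eq_zero]
      exact hc j
    rw [hrank] at hker
    have heq : f₂ = c • f₁ :=
      sub_eq_zero.mp (LinearMap.ext fun x => LinearMap.mem_ker.mp (hker Submodule.mem_top))
    have hwT : w ∈ T := le_sup_right (α := Submodule K (Fin k → K))
      (Submodule.mem_span_singleton_self w)
    have hw2 : f₂ w = 0 := LinearMap.mem_ker.mp (hTf₂ hwT)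
    rw [heq] at hw2
    simp only [LinearMap.smul_apply, smul_eq_mul, mul_eq_zero] at hw2
    rcases hw2 with h | h
    · exact hc0 h
    · exact hwH (hkf₁ ▸ LinearMap.mem_ker.mpr h)
  · -- strong blocking → minimal
    intro hsbs u hu u' hu' hsupp
    have hf₁0 : dpL K u ≠ 0 := dpL_ne_zero K hu
    have hH := finrank_ker_add_one (V := Fin k → K) hf₁0
    have hspan := hsbs (LinearMap.ker (dpL K u)) hH
    have hle : LinearMap.ker (dpL K u) ≤ LinearMap.ker (dpL K u') := by
      rw [← hspan]
      refine iSup₂_le ?_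
      rintro P ⟨⟨j, rfl⟩, hPH⟩
      rw [Projectivization.submodule_mk] at hPH ⊢
      rw [Submodule.span_singleton_le_iff_mem] at hPH ⊢
      rw [LinearMap.mem_ker, dpL_apply] at hPH ⊢
      by_contra hne
      exact (hsupp hne) hPH
    obtain ⟨c, hc⟩ := eq_smul_of_ker_le_ker hf₁0 hle
    have hc0 : c ≠ 0 := by
      rintro rfl
      exact dpL_ne_zero K hu' (by rw [hc]; simp)
    refine ⟨c, hc0, fun j => ?_⟩
    have := congrArg (fun f : (Fin k → K) →ₗ[K] K => f (g j)) hc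
    simpa [dpL_apply] using this
end

section
/- Let k points in PG(k-1,q) be in general position (i.e., any k of them span the whole space, equivalently representative vectors form a basis). Then the union of the (k choose 2) lines through all pairs of these points is a strong blocking set in PG(k-1,q), of size (k choose 2)(q-1) + k. -/
/-!
Strong blocking: a hyperplane `H` misses some basis vector `u = v j`. Every other `v i` decomposes
as `w + c • u` with `w ∈ H`, and `w` lies on the edge through `v i` and `u`. So the points of the
tetrahedron on `H` span a subspace `T ≤ H` with `T ⊔ ⟨u⟩` the whole space, and the modular law
forces `T = H`.

Counting: by linear independence, every point of the tetrahedron has exactly one representative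
whose coefficient vector is `eᵢ` or `eᵢ + c • eⱼ` with `i < j` and `c ≠ 0`; among scalar multiples
this representative is singled out by the coefficient `1` at the smallest index of the support.
-/

open Projectivization

open Submodule Set
open scoped LinearAlgebra.Projectivization

section

variable {K V : Type*} [DivisionRing K] [AddCommGroup V] [Module K V]

variable (K) in
def tetrahedron {ι : Type*} (v : ι → V) : Set (ℙ K V) :=
  {Q | ∃ i j, i ≠ j ∧ Q.submodule ≤ span K {v i, v j}}

lemma mem_projSpan_of_forall_mk_mem {S : Set (ℙ K V)} {x : V}
    (h : ∀ hx : x ≠ 0, mk K x hx ∈ S) : x ∈ projSpan S := by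
  by_cases hx : x = 0
  · exact hx ▸ zero_mem _
  · have : (mk K x hx).submodule ≤ projSpan S := le_biSup (fun P ↦ P.submodule) (h hx)
    exact this (by simp [submodule_mk, mem_span_singleton_self])

lemma Submodule.sup_span_singleton_eq_top_of_finrank_add_one {H : Submodule K V} {u : V}
    (hH : Module.finrank K H + 1 = Module.finrank K V) (hu : u ∉ H) : H ⊔ K ∙ u = ⊤ := by
  have : FiniteDimensional K V := Module.finite_of_finrank_pos (by omega)
  have hlt : H < H ⊔ K ∙ u :=
    left_lt_sup.mpr fun h ↦ hu (h (mem_span_singleton_self u))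
  have := finrank_lt_finrank_of_lt hlt
  exact eq_top_of_finrank_eq (le_antisymm (finrank_le _) (by omega))

lemma Submodule.eq_of_le_of_sup_span_singleton_eq_top {T H : Submodule K V} {u : V}
    (hTH : T ≤ H) (hu : u ∉ H) (hT : T ⊔ K ∙ u = ⊤) : T = H := by
  have hdisj : H ⊓ K ∙ u = ⊥ := (disjoint_span_singleton_of_notMem hu).eq_bot
  calc T = T ⊔ (K ∙ u) ⊓ H := by rw [inf_comm, hdisj, sup_bot_eq]
    _ = (T ⊔ K ∙ u) ⊓ H := (sup_inf_assoc_of_le _ hTH).symm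
    _ = H := by rw [hT, top_inf_eq]

theorem isStrongBlockingSet_tetrahedron {ι : Type*} {v : ι → V}
    (hv : span K (range v) = ⊤) : IsStrongBlockingSet (tetrahedron K v) := by
  intro H hH
  set T := projSpan {P | P ∈ tetrahedron K v ∧ P.submodule ≤ H}
  obtain ⟨j, hj⟩ : ∃ j, v j ∉ H := by
    by_contra! hall
    have : H = ⊤ := eq_top_iff.mpr (hv ▸ span_le.mpr (range_subset_iff.mpr hall))
    rw [this, finrank_top] at hH
    omega
  refine eq_of_le_of_sup_span_singleton_eq_top (iSup₂_le fun P hP ↦ hP.2) hj ?_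
  rw [eq_top_iff, ← hv, span_le, range_subset_iff]
  intro i
  by_cases hij : i = j
  · exact hij ▸ mem_sup_right (mem_span_singleton_self _)
  have hsup : v i ∈ H ⊔ K ∙ v j := sup_span_singleton_eq_top_of_finrank_add_one hH hj ▸ mem_top
  obtain ⟨w, hwH, z, hz, hvi⟩ := mem_sup.mp hsup
  obtain ⟨c, rfl⟩ := mem_span_singleton.mp hz
  have hw_line : w ∈ span K {v i, v j} := mem_span_pair.mpr
    ⟨1, -c, by rw [one_smul, neg_smul, ← sub_eq_add_neg, ← hvi, add_sub_cancel_right]⟩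
  have hwT : w ∈ T := mem_projSpan_of_forall_mk_mem fun hw0 ↦ by
    refine ⟨⟨i, j, hij, ?_⟩, ?_⟩ <;> rwa [submodule_mk, span_singleton_le_iff_mem]
  exact hvi ▸ add_mem (mem_sup_left hwT) (mem_sup_right (smul_mem _ c (mem_span_singleton_self _)))

section Count

open Finsupp Function

variable {ι : Type*} [LinearOrder ι] {v : ι → V}

variable (K ι) in
/-- `inl i` encodes the vertex `⟨v i⟩` and `inr ((i, j), c)` the point `⟨v i + c • v j⟩` on the
edge through `⟨v i⟩` and `⟨v j⟩`. -/
abbrev TetrahedronIndex := ι ⊕ ({p : ι × ι // p.1 < p.2} × Kˣ)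

namespace TetrahedronIndex

def lead : TetrahedronIndex K ι → ι
  | .inl i => i
  | .inr (p, _) => p.1.1

noncomputable def coeffs : TetrahedronIndex K ι → ι →₀ K
  | .inl i => single i 1
  | .inr (p, c) => single p.1.1 1 + single p.1.2 (c : K)

lemma coeffs_lead (a : TetrahedronIndex K ι) : a.coeffs a.lead = 1 := by
  rcases a with i | ⟨⟨⟨i, j⟩, hij : i < j⟩, c⟩
  · simp [lead, coeffs]
  · simp [lead, coeffs, hij.ne']

lemma coeffs_of_lt_lead {a : TetrahedronIndex K ι} {m : ι} (hm : m < a.lead) : a.coeffs m = 0 := by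
  rcases a with i | ⟨⟨⟨i, j⟩, hij : i < j⟩, c⟩ <;> simp only [lead] at hm
  · simp [coeffs, hm.ne']
  · simp [coeffs, hm.ne', (hm.trans hij).ne']

lemma lead_le_of_coeffs_eq_smul {a b : TetrahedronIndex K ι} {r : K}
    (h : a.coeffs = r • b.coeffs) : b.lead ≤ a.lead := by
  by_contra! hlt
  simpa [coeffs_lead, coeffs_of_lt_lead hlt] using congr($h a.lead)

lemma eq_of_coeffs_eq_smul {a b : TetrahedronIndex K ι} {r : K} (h : a.coeffs = r • b.coeffs) :
    a = b := by
  have hr : r ≠ 0 := by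
    rintro rfl
    simpa [coeffs_lead] using congr($h a.lead)
  have hlead : a.lead = b.lead := le_antisymm
    (lead_le_of_coeffs_eq_smul (r := r⁻¹) (by rw [h, smul_smul, inv_mul_cancel₀ hr, one_smul]))
    (lead_le_of_coeffs_eq_smul h)
  obtain rfl : r = 1 := calc
    r = (r • b.coeffs) b.lead := by simp [coeffs_lead]
    _ = 1 := by rw [← h, ← hlead, coeffs_lead]
  rw [one_smul] at h
  rcases a with i | ⟨⟨⟨i, j⟩, hij : i < j⟩, c⟩ <;>
    rcases b with i' | ⟨⟨⟨i', j'⟩, hij' : i' < j'⟩, c'⟩ <;>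
    simp only [lead] at hlead <;> subst hlead <;>
    simp only [coeffs, left_eq_add, add_eq_left, add_right_inj, single_eq_zero, Units.ne_zero,
      single_eq_single_iff, and_self, or_false, Sum.inr.injEq, Prod.mk.injEq, Subtype.mk.injEq,
      true_and] at h ⊢
  obtain ⟨rfl, h⟩ := h
  exact ⟨rfl, Units.ext h⟩

lemma coeffs_ne_zero (a : TetrahedronIndex K ι) : a.coeffs ≠ 0 :=
  fun h ↦ by simpa [h] using a.coeffs_lead

noncomputable def point (hv : LinearIndependent K v) (a : TetrahedronIndex K ι) : ℙ K V :=
  mk K (linearCombination K v a.coeffs) fun h ↦ a.coeffs_ne_zero (hv (h.trans (map_zero _).symm))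

lemma point_injective (hv : LinearIndependent K v) : Injective (point hv) := by
  intro a b h
  obtain ⟨r, hr⟩ := (mk_eq_mk_iff' K _ _ _ _).mp h
  exact eq_of_coeffs_eq_smul (hv (by rw [map_smul, hr]))

lemma mem_range_point_of_le_span_pair (hv : LinearIndependent K v) {i j : ι} (hij : i < j)
    {Q : ℙ K V} (hQ : Q.submodule ≤ span K {v i, v j}) : Q ∈ range (point hv) := by
  induction Q using Projectivization.ind with | h x hx => ?_
  rw [submodule_mk, span_singleton_le_iff_mem, mem_span_pair] at hQ
  obtain ⟨s, t, rfl⟩ := hQ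
  suffices ∃ a r, r • linearCombination K v (coeffs a) = s • v i + t • v j from
    let ⟨a, r, har⟩ := this; ⟨a, ((mk_eq_mk_iff' K _ _ _ _).mpr ⟨r, har⟩).symm⟩
  by_cases ht : t = 0
  · exact ⟨.inl i, s, by simp [coeffs, ht]⟩
  by_cases hs : s = 0
  · exact ⟨.inl j, t, by simp [coeffs, hs]⟩
  · refine ⟨.inr (⟨(i, j), hij⟩, .mk0 (s⁻¹ * t) (mul_ne_zero (inv_ne_zero hs) ht)), s, ?_⟩
    simp only [coeffs, Units.val_mk0, map_add, linearCombination_single, one_smul, smul_add,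
      smul_smul, mul_inv_cancel_left₀ hs]

lemma range_point [Nontrivial ι] (hv : LinearIndependent K v) :
    range (point hv) = tetrahedron K v := by
  refine Subset.antisymm ?_ fun Q ⟨i, j, hij, hQ⟩ ↦ ?_
  · rintro _ ⟨i | ⟨⟨⟨i, j⟩, hij : i < j⟩, c⟩, rfl⟩
    · obtain ⟨j, hj⟩ := exists_ne i
      refine ⟨i, j, hj.symm, ?_⟩
      simp only [point, coeffs, submodule_mk, span_singleton_le_iff_mem, mem_span_pair,
        linearCombination_single, one_smul]
      exact ⟨1, 0, by simp⟩
    · refine ⟨i, j, hij.ne, ?_⟩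
      simp only [point, coeffs, submodule_mk, span_singleton_le_iff_mem, mem_span_pair,
        map_add, linearCombination_single, one_smul]
      exact ⟨1, c, by simp⟩
  · rcases hij.lt_or_gt with hlt | hlt
    · exact mem_range_point_of_le_span_pair hv hlt hQ
    · exact mem_range_point_of_le_span_pair hv hlt (pair_comm (v i) (v j) ▸ hQ)

end TetrahedronIndex

end Count

lemma Fintype.card_subtype_fst_lt_snd {ι : Type*} [LinearOrder ι] [Fintype ι] :
    Fintype.card {p : ι × ι // p.1 < p.2} = (Fintype.card ι).choose 2 := by
  classical
  rw [Fintype.card_subtype, ← Finset.univ_product_univ, Finset.card_product_filter_lt,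
    Finset.card_univ]

theorem ncard_tetrahedron {ι : Type*} [Fintype ι] [Nontrivial ι] [Finite K] {v : ι → V}
    (hv : LinearIndependent K v) :
    (tetrahedron K v).ncard = (Fintype.card ι).choose 2 * (Nat.card K - 1) + Fintype.card ι := by
  let : LinearOrder ι := LinearOrder.lift' _ (Fintype.equivFin ι).injective
  rw [← TetrahedronIndex.range_point hv, ← image_univ,
    ncard_image_of_injective _ (TetrahedronIndex.point_injective hv), ncard_univ, Nat.card_sum,
    Nat.card_prod, Nat.card_units, Nat.card_eq_fintype_card (α := ι),
    Nat.card_eq_fintype_card (α := {p : ι × ι // p.1 < p.2}), Fintype.card_subtype_fst_lt_snd]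
  ring

end

/-- The tetrahedron: given `k` points of `PG(k-1, q)` in general position (their
representative vectors are linearly independent, hence a basis), the union of the
`(k choose 2)` lines through all pairs of these points is a strong blocking set
of size `(k choose 2)(q - 1) + k`. -/
theorem stmt8 {q k : ℕ} (K : Type*) [Field K] [Fintype K] (hq : Fintype.card K = q)
    (hk : 2 ≤ k) (v : Fin k → (Fin k → K)) (hv : LinearIndependent K v) :
    IsStrongBlockingSet {Q : Projectivization K (Fin k → K) |
        ∃ i j : Fin k, i ≠ j ∧ Q.submodule ≤ Submodule.span K {v i, v j}} ∧
      {Q : Projectivization K (Fin k → K) |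
        ∃ i j : Fin k, i ≠ j ∧ Q.submodule ≤ Submodule.span K {v i, v j}}.ncard =
        k.choose 2 * (q - 1) + k := by
  change IsStrongBlockingSet (tetrahedron K v) ∧ (tetrahedron K v).ncard = _
  have : Nontrivial (Fin k) := Fin.nontrivial_iff_two_le.mpr hk
  have hspan : span K (range v) = ⊤ :=
    hv.span_eq_top_of_card_eq_finrank (by rw [Module.finrank_fin_fun, Fintype.card_fin])
  refine ⟨isStrongBlockingSet_tetrahedron hspan, ?_⟩
  rw [ncard_tetrahedron hv, Fintype.card_fin, Nat.card_eq_fintype_card, hq]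
end

section
/- (Expander mixing lemma) Let G be an (n,d,λ)-graph and S, T ⊆ V(G). Then |e(S,T) - d|S||T|/n| ≤ λ√(|S||T|(1 - |S|/n)(1 - |T|/n)), where e(S,T) is the number of pairs (x,y) ∈ S × T with xy an edge of G. -/
open SimpleGraph Finset Matrix

private lemma mixing_key {V : Type*} [Fintype V] [DecidableEq V] {A : Matrix V V ℝ}
    (hA : A.IsHermitian) {d : ℕ} {lam : ℝ} (hlam0 : 0 ≤ lam) (i₀ : V)
    (hi₀ : hA.eigenvalues i₀ = d)
    (hlam : ∀ i, i ≠ i₀ → |hA.eigenvalues i| ≤ lam)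
    (x y : V → ℝ)
    (hx0 : (inner ℝ (hA.eigenvectorBasis i₀) (WithLp.toLp 2 x : EuclideanSpace ℝ V) : ℝ) = 0 ∨ (d : ℝ) ≤ lam) :
    |x ⬝ᵥ A *ᵥ y| ≤ lam * Real.sqrt ((x ⬝ᵥ x) * (y ⬝ᵥ y)) := by
  classical
  set b := hA.eigenvectorBasis with hb
  set μ := hA.eigenvalues with hμ
  have hip : ∀ f g : EuclideanSpace ℝ V, (inner ℝ f g : ℝ) = ∑ i, f i * g i := fun f g => by
    simp [PiLp.inner_apply, RCLike.inner_apply]; exact Finset.sum_congr rfl fun _ _ => mul_comm _ _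
  have hdot : ∀ f g : EuclideanSpace ℝ V, (f : V → ℝ) ⬝ᵥ (g : V → ℝ) = (inner ℝ f g : ℝ) :=
    fun f g => by rw [hip]; rfl
  set c : V → ℝ := fun i => (inner ℝ (b i) (WithLp.toLp 2 x : EuclideanSpace ℝ V) : ℝ) with hc
  set e : V → ℝ := fun i => (inner ℝ (b i) (WithLp.toLp 2 y : EuclideanSpace ℝ V) : ℝ) with he
  have hswap : ∀ v w : V → ℝ, (A *ᵥ v) ⬝ᵥ w = v ⬝ᵥ (A *ᵥ w) := fun v w => by
    rw [Matrix.dotProduct_mulVec, ← Matrix.mulVec_transpose, show Aᵀ = A by simpa using hA.eq]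
  have hbAy : ∀ i : V, (inner ℝ (b i) (WithLp.toLp 2 (A *ᵥ y) : EuclideanSpace ℝ V) : ℝ) = μ i * e i := by
    intro i
    rw [← hdot, ← hswap]
    have := hA.mulVec_eigenvectorBasis i
    rw [← hb, ← hμ] at this
    rw [show ((b i : EuclideanSpace ℝ V) : V → ℝ) = ⇑(b i) from rfl, this,
      smul_dotProduct, hdot]
    simp only [smul_eq_mul]
    rfl
  have hexp : x ⬝ᵥ A *ᵥ y = ∑ i, μ i * (c i * e i) := by
    rw [hdot (WithLp.toLp 2 x : EuclideanSpace ℝ V) (WithLp.toLp 2 (A *ᵥ y) : EuclideanSpace ℝ V)]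
    rw [← b.sum_inner_mul_inner (WithLp.toLp 2 x : EuclideanSpace ℝ V) (WithLp.toLp 2 (A *ᵥ y) : EuclideanSpace ℝ V)]
    refine Finset.sum_congr rfl fun i _ => ?_
    rw [hbAy i, real_inner_comm]
    simp only [hc]
    ring
  have hxx : x ⬝ᵥ x = ∑ i, c i ^ 2 := by
    rw [hdot (WithLp.toLp 2 x : EuclideanSpace ℝ V) (WithLp.toLp 2 x : EuclideanSpace ℝ V),
      ← b.sum_inner_mul_inner (WithLp.toLp 2 x : EuclideanSpace ℝ V) (WithLp.toLp 2 x : EuclideanSpace ℝ V)]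
    refine Finset.sum_congr rfl fun i _ => ?_
    rw [real_inner_comm]; simp [hc, sq]
  have hyy : y ⬝ᵥ y = ∑ i, e i ^ 2 := by
    rw [hdot (WithLp.toLp 2 y : EuclideanSpace ℝ V) (WithLp.toLp 2 y : EuclideanSpace ℝ V),
      ← b.sum_inner_mul_inner (WithLp.toLp 2 y : EuclideanSpace ℝ V) (WithLp.toLp 2 y : EuclideanSpace ℝ V)]
    refine Finset.sum_congr rfl fun i _ => ?_
    rw [real_inner_comm]; simp [he, sq]
  -- termwise bound
  have hterm : ∀ i : V, |μ i * (c i * e i)| ≤ lam * (|c i| * |e i|) := by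
    intro i
    rcases eq_or_ne i i₀ with rfl | hne
    · rcases hx0 with h0 | hd
      · simp [show c i = 0 from h0]
      · rw [abs_mul, abs_mul]
        have hμle : |μ i| ≤ lam := by rw [hi₀]; rwa [abs_of_nonneg (by positivity)]
        exact mul_le_mul_of_nonneg_right hμle (by positivity)
    · rw [abs_mul, abs_mul]
      exact mul_le_mul_of_nonneg_right (hlam i hne) (by positivity)
  have hCS : ∑ i, |c i| * |e i| ≤ Real.sqrt ((∑ i, c i ^ 2) * ∑ i, e i ^ 2) := by
    have h := Finset.sum_mul_sq_le_sq_mul_sq Finset.univ (fun i => |c i|) (fun i => |e i|)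
    simp only [sq_abs] at h
    have hnn : 0 ≤ ∑ i, |c i| * |e i| :=
      Finset.sum_nonneg fun i _ => mul_nonneg (abs_nonneg _) (abs_nonneg _)
    calc ∑ i, |c i| * |e i| = Real.sqrt ((∑ i, |c i| * |e i|) ^ 2) := by
          rw [Real.sqrt_sq hnn]
      _ ≤ Real.sqrt ((∑ i, c i ^ 2) * ∑ i, e i ^ 2) := Real.sqrt_le_sqrt h
  calc |x ⬝ᵥ A *ᵥ y| = |∑ i, μ i * (c i * e i)| := by rw [hexp]
    _ ≤ ∑ i, |μ i * (c i * e i)| := Finset.abs_sum_le_sum_abs _ _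
    _ ≤ ∑ i, lam * (|c i| * |e i|) := Finset.sum_le_sum fun i _ => hterm i
    _ = lam * ∑ i, |c i| * |e i| := by rw [← Finset.mul_sum]
    _ ≤ lam * Real.sqrt ((∑ i, c i ^ 2) * ∑ i, e i ^ 2) :=
        mul_le_mul_of_nonneg_left hCS hlam0
    _ = lam * Real.sqrt ((x ⬝ᵥ x) * (y ⬝ᵥ y)) := by rw [hxx, hyy]

/-- Expander mixing lemma: in an `(n, d, λ)`-graph, for any vertex subsets `S, T`,
`|e(S,T) - d|S||T|/n| ≤ λ √(|S||T|(1 - |S|/n)(1 - |T|/n))`, where `e(S,T)` counts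
ordered pairs `(x, y) ∈ S × T` with `xy` an edge. -/
theorem stmt10 {V : Type*} [Fintype V] [DecidableEq V] (G : SimpleGraph V)
    [DecidableRel G.Adj] (d : ℕ) (lam : ℝ)
    (hreg : G.IsRegularOfDegree d)
    (hA : (G.adjMatrix ℝ).IsHermitian)
    (i₀ : V) (hi₀ : hA.eigenvalues i₀ = d)
    (hlam : ∀ i : V, i ≠ i₀ → |hA.eigenvalues i| ≤ lam)
    (S T : Finset V) :
    |((((S ×ˢ T).filter fun p => G.Adj p.1 p.2).card : ℝ) -
        d * S.card * T.card / Fintype.card V)| ≤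
      lam * Real.sqrt ((S.card : ℝ) * T.card * (1 - (S.card : ℝ) / Fintype.card V) *
        (1 - (T.card : ℝ) / Fintype.card V)) := by
  classical
  have hnV : 0 < Fintype.card V := Fintype.card_pos_iff.mpr ⟨i₀⟩
  set A : Matrix V V ℝ := G.adjMatrix ℝ with hAdef
  set nR : ℝ := (Fintype.card V : ℝ) with hnRdef
  have hnR : 0 < nR := by rw [hnRdef]; exact_mod_cast hnV
  set s : ℝ := (S.card : ℝ) with hs
  set t : ℝ := (T.card : ℝ) with ht
  set o : V → ℝ := fun _ => 1 with ho
  set χS : V → ℝ := fun v => if v ∈ S then 1 else 0 with hχS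
  set χT : V → ℝ := fun v => if v ∈ T then 1 else 0 with hχT
  set x : V → ℝ := χS - (s / nR) • o with hx
  set y : V → ℝ := χT - (t / nR) • o with hy
  have hAo : A *ᵥ o = (d : ℝ) • o := by
    funext v
    simp [hAdef, ho, SimpleGraph.adjMatrix_mulVec_apply, hreg v]
  have hswap : ∀ v w : V → ℝ, (A *ᵥ v) ⬝ᵥ w = v ⬝ᵥ (A *ᵥ w) := fun v w => by
    rw [Matrix.dotProduct_mulVec, ← Matrix.mulVec_transpose, show Aᵀ = A by simpa using hA.eq]
  have hoS : o ⬝ᵥ χS = s := by simp [dotProduct, ho, hχS, hs]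
  have hSo : χS ⬝ᵥ o = s := by simp [dotProduct, ho, hχS, hs]
  have hoT : o ⬝ᵥ χT = t := by simp [dotProduct, ho, hχT, ht]
  have hoo : o ⬝ᵥ o = nR := by simp [dotProduct, ho, hnRdef]
  have hSS : χS ⬝ᵥ χS = s := by simp [dotProduct, hχS, hs, ite_and]
  have hTT : χT ⬝ᵥ χT = t := by simp [dotProduct, hχT, ht, ite_and]
  have hE : χS ⬝ᵥ (A *ᵥ χT) = (((S ×ˢ T).filter fun p => G.Adj p.1 p.2).card : ℝ) := by
    rw [Finset.card_filter]
    push_cast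
    rw [Finset.sum_product]
    simp only [dotProduct, Matrix.mulVec, hχS, hχT, boole_mul, mul_boole, dotProduct]
    rw [Finset.sum_ite_mem, Finset.univ_inter]
    refine Finset.sum_congr rfl fun a _ => ?_
    rw [Finset.sum_ite_mem, Finset.univ_inter]
    exact Finset.sum_congr rfl fun b _ => by simp [hAdef]
  have hoAT : o ⬝ᵥ (A *ᵥ χT) = d * t := by
    rw [← hswap, hAo, smul_dotProduct, hoT, smul_eq_mul]
  have hxAy : x ⬝ᵥ (A *ᵥ y) = χS ⬝ᵥ (A *ᵥ χT) - d * s * t / nR := by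
    rw [hx, hy]
    rw [Matrix.mulVec_sub, Matrix.mulVec_smul, hAo]
    simp only [sub_dotProduct, dotProduct_sub, smul_dotProduct,
      dotProduct_smul, smul_eq_mul, hSo, hoAT, hoo, hoS]
    field_simp
    ring
  have hox : o ⬝ᵥ x = 0 := by
    rw [hx]
    simp only [dotProduct_sub, dotProduct_smul, smul_eq_mul, hoS, hoo]
    field_simp
    ring
  have hxx : x ⬝ᵥ x = s * (1 - s / nR) := by
    rw [hx]
    simp only [sub_dotProduct, dotProduct_sub, smul_dotProduct,
      dotProduct_smul, smul_eq_mul, hSS, hSo, hoS, hoo]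
    field_simp
    ring
  have hyy : y ⬝ᵥ y = t * (1 - t / nR) := by
    rw [hy]
    simp only [sub_dotProduct, dotProduct_sub, smul_dotProduct,
      dotProduct_smul, smul_eq_mul, hTT, hoT, hoo]
    have hTo : χT ⬝ᵥ o = t := by simp [dotProduct, ho, hχT, ht]
    rw [hTo]
    field_simp
    ring
  rcases Nat.lt_or_ge 1 (Fintype.card V) with h2 | h1
  · -- main case
    obtain ⟨j, hj⟩ := Fintype.exists_ne_of_one_lt_card h2 i₀
    have hlam0 : 0 ≤ lam := (abs_nonneg _).trans (hlam j hj)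
    have hdot : ∀ f g : EuclideanSpace ℝ V, (f : V → ℝ) ⬝ᵥ (g : V → ℝ) = (inner ℝ f g : ℝ) :=
      fun f g => by simp [PiLp.inner_apply, RCLike.inner_apply, dotProduct]; exact Finset.sum_congr rfl fun _ _ => mul_comm _ _
    set b := hA.eigenvectorBasis with hb
    set μ := hA.eigenvalues with hμ
    have hx0 : (inner ℝ (b i₀) (WithLp.toLp 2 x : EuclideanSpace ℝ V) : ℝ) = 0 ∨ (d : ℝ) ≤ lam := by
      by_cases hdl : (d : ℝ) ≤ lam
      · exact Or.inr hdl
      push_neg at hdl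
      left
      have horth : ∀ i, i ≠ i₀ → ((b i : EuclideanSpace ℝ V) : V → ℝ) ⬝ᵥ o = 0 := by
        intro i hi
        have hAb : A *ᵥ ((b i : EuclideanSpace ℝ V) : V → ℝ)
            = μ i • ((b i : EuclideanSpace ℝ V) : V → ℝ) := hA.mulVec_eigenvectorBasis i
        have h1 : (A *ᵥ ((b i : EuclideanSpace ℝ V) : V → ℝ)) ⬝ᵥ o
            = μ i * (((b i : EuclideanSpace ℝ V) : V → ℝ) ⬝ᵥ o) := by
          rw [hAb, smul_dotProduct, smul_eq_mul]
        have h2 : (A *ᵥ ((b i : EuclideanSpace ℝ V) : V → ℝ)) ⬝ᵥ o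
            = (d : ℝ) * (((b i : EuclideanSpace ℝ V) : V → ℝ) ⬝ᵥ o) := by
          rw [hswap, hAo, dotProduct_smul, smul_eq_mul]
        have h3 : ((d : ℝ) - μ i) * (((b i : EuclideanSpace ℝ V) : V → ℝ) ⬝ᵥ o) = 0 := by
          linear_combination h1 - h2
        rcases mul_eq_zero.mp h3 with h | h
        · exfalso
          have : μ i < (d : ℝ) := lt_of_le_of_lt (le_abs_self _) ((hlam i hi).trans_lt hdl)
          linarith [sub_eq_zero.mp h]
        · exact h
      have hzero : ∀ i ∈ Finset.univ, i ≠ i₀ →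
          (@inner ℝ (EuclideanSpace ℝ V) _ (WithLp.toLp 2 o) (b i)) = 0 := by
        intro i _ hi
        rw [real_inner_comm, ← hdot (b i) (WithLp.toLp 2 o)]
        exact horth i hi
      have hP := b.sum_inner_mul_inner (E := EuclideanSpace ℝ V) (WithLp.toLp 2 o) (WithLp.toLp 2 x)
      rw [Finset.sum_eq_single_of_mem i₀ (Finset.mem_univ i₀)
        (fun i hmem hi => by rw [hzero i hmem hi, zero_mul])] at hP
      rw [← hdot (WithLp.toLp 2 o) (WithLp.toLp 2 x), WithLp.ofLp_toLp, WithLp.ofLp_toLp, hox] at hP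
      have hPo := b.sum_inner_mul_inner (E := EuclideanSpace ℝ V) (WithLp.toLp 2 o) (WithLp.toLp 2 o)
      rw [Finset.sum_eq_single_of_mem i₀ (Finset.mem_univ i₀)
        (fun i hmem hi => by rw [hzero i hmem hi, zero_mul])] at hPo
      rw [← hdot (WithLp.toLp 2 o) (WithLp.toLp 2 o), WithLp.ofLp_toLp, hoo] at hPo
      have hne : (@inner ℝ (EuclideanSpace ℝ V) _ (WithLp.toLp 2 o) (b i₀)) ≠ 0 := by
        intro h
        rw [h, zero_mul] at hPo
        exact hnR.ne' hPo.symm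
      exact (mul_eq_zero.mp hP).resolve_left hne
    have key := mixing_key hA hlam0 i₀ hi₀ hlam x y hx0
    rw [hxAy, hE, hxx, hyy] at key
    calc |((((S ×ˢ T).filter fun p => G.Adj p.1 p.2).card : ℝ) - d * s * t / nR)|
        ≤ lam * Real.sqrt (s * (1 - s / nR) * (t * (1 - t / nR))) := key
      _ = lam * Real.sqrt (s * t * (1 - s / nR) * (1 - t / nR)) := by ring_nf
  · -- card V = 1
    have hcard : Fintype.card V = 1 := le_antisymm h1 hnV
    have hsub : Subsingleton V := Fintype.card_le_one_iff_subsingleton.mp h1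
    have hfil : ((S ×ˢ T).filter fun p => G.Adj p.1 p.2) = ∅ := by
      refine Finset.filter_false_of_mem fun p _ => ?_
      intro hadj
      exact G.ne_of_adj hadj (Subsingleton.elim _ _)
    have hd0 : d = 0 := by
      have := hreg i₀
      have hlt := G.degree_lt_card_verts i₀
      omega
    have harg : s * t * (1 - s / nR) * (1 - t / nR) = 0 := by
      have hScard : S.card ≤ 1 := (Finset.card_le_univ S).trans (by omega)
      have hnR1 : nR = 1 := by rw [hnRdef, hcard]; norm_num
      rcases Nat.le_one_iff_eq_zero_or_eq_one.mp hScard with h | h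
      · rw [hs, h]
        norm_num
      · rw [hs, h, hnR1]
        norm_num
    rw [hfil, hd0, harg]
    simp
end

section
/- For every d ≥ 2 and n ≥ d, there exists a graph G on n vertices with average degree at most d whose vertex integrity satisfies ι(G) ≥ (1 - 4(log d)/d) · n. -/
open SimpleGraph

open Finset in
lemma hitting {X : Type*} [Fintype X] [DecidableEq X] (r : ℕ) (hr : 1 ≤ r) :
    ∀ (t : ℕ) (F : Finset (Finset X)), (∀ A ∈ F, r ≤ A.card) →
    (F.card : ℝ) * (1 - (r : ℝ) / (Fintype.card X)) ^ t < 1 →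
    ∃ H : Finset X, H.card ≤ t ∧ ∀ A ∈ F, (A ∩ H).Nonempty := by
  intro t
  induction t with
  | zero =>
    intro F hF hbound
    rw [pow_zero, mul_one] at hbound
    have : F.card = 0 := by exact_mod_cast Nat.lt_one_iff.mp (by exact_mod_cast hbound)
    refine ⟨∅, le_refl _, ?_⟩
    intro A hA
    simp [Finset.card_eq_zero.mp this] at hA
  | succ t ih =>
    intro F hF hbound
    rcases F.eq_empty_or_nonempty with rfl | hne
    · exact ⟨∅, by simp, by simp⟩
    obtain ⟨A₀, hA₀⟩ := hne
    have hrN : r ≤ Fintype.card X := le_trans (hF A₀ hA₀) (A₀.card_le_univ)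
    have hN : 0 < Fintype.card X := lt_of_lt_of_le hr hrN
    -- averaging
    have hsum : F.card * r ≤ ∑ x : X, (F.filter (fun A => x ∈ A)).card := by
      have h1 : ∑ x : X, (F.filter (fun A => x ∈ A)).card = ∑ A ∈ F, A.card := by
        simp only [Finset.card_filter]
        rw [Finset.sum_comm]
        exact Finset.sum_congr rfl fun A _ => by
          rw [← Finset.card_filter, Finset.filter_univ_mem]
      rw [h1]
      calc F.card * r = ∑ _A ∈ F, r := by rw [Finset.sum_const, smul_eq_mul, mul_comm]
        _ ≤ ∑ A ∈ F, A.card := Finset.sum_le_sum hF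
    have hex : ∃ x : X, F.card * r ≤ (Fintype.card X) * (F.filter (fun A => x ∈ A)).card := by
      by_contra h
      push_neg at h
      have h2 : ∑ x : X, (Fintype.card X) * (F.filter (fun A => x ∈ A)).card
          < ∑ _x : X, F.card * r := by
        apply Finset.sum_lt_sum_of_nonempty
        · exact Finset.univ_nonempty_iff.mpr (Fintype.card_pos_iff.mp hN)
        · intro x _; exact h x
      rw [Finset.sum_const, ← Finset.mul_sum] at h2
      have := Nat.mul_le_mul_left (Fintype.card X) hsum
      simp only [Finset.card_univ, smul_eq_mul] at h2
      omega
    obtain ⟨x, hx⟩ := hex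
    set F' := F.filter (fun A => x ∉ A) with hF'def
    have hsplit : (F.filter (fun A => x ∈ A)).card + F'.card = F.card := by
      rw [hF'def]; exact Finset.card_filter_add_card_filter_not _
    have hNne : (Fintype.card X : ℝ) ≠ 0 := by positivity
    have hfrac : (0:ℝ) ≤ 1 - (r : ℝ) / (Fintype.card X) := by
      rw [sub_nonneg, div_le_one (by positivity)]
      exact_mod_cast hrN
    have h1 : (F'.card : ℝ) ≤ F.card * (1 - (r : ℝ) / (Fintype.card X)) := by
      have hxR : (F.card : ℝ) * r ≤ (Fintype.card X) * (F.filter (fun A => x ∈ A)).card := by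
        exact_mod_cast hx
      have hcardR : (F'.card : ℝ) = F.card - (F.filter (fun A => x ∈ A)).card := by
        have := hsplit; push_cast [← this]; ring
      rw [hcardR, mul_sub, mul_one]
      have : (F.card : ℝ) * ((r : ℝ) / (Fintype.card X)) ≤ (F.filter (fun A => x ∈ A)).card := by
        rw [mul_div_assoc', div_le_iff₀ (by positivity)]
        linarith [hxR]
      linarith
    have hb' : (F'.card : ℝ) * (1 - (r : ℝ) / (Fintype.card X)) ^ t < 1 := by
      calc (F'.card : ℝ) * (1 - (r : ℝ) / (Fintype.card X)) ^ t
          ≤ (F.card * (1 - (r : ℝ) / (Fintype.card X))) * (1 - (r : ℝ) / (Fintype.card X)) ^ t :=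
            mul_le_mul_of_nonneg_right h1 (pow_nonneg hfrac t)
        _ = (F.card : ℝ) * (1 - (r : ℝ) / (Fintype.card X)) ^ (t + 1) := by ring
        _ < 1 := hbound
    obtain ⟨H, hHcard, hHhit⟩ := ih F' (fun A hA => hF A (Finset.filter_subset _ _ hA)) hb'
    refine ⟨insert x H, le_trans (Finset.card_insert_le _ _) (by omega), ?_⟩
    intro A hA
    by_cases hxA : x ∈ A
    · exact ⟨x, Finset.mem_inter.mpr ⟨hxA, Finset.mem_insert_self _ _⟩⟩
    · obtain ⟨y, hy⟩ := hHhit A (Finset.mem_filter.mpr ⟨hA, hxA⟩)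
      rw [Finset.mem_inter] at hy
      exact ⟨y, Finset.mem_inter.mpr ⟨hy.1, Finset.mem_insert_of_mem hy.2⟩⟩

lemma pow_self_le_fact_mul_exp : ∀ s : ℕ, (s : ℝ) ^ s ≤ (s.factorial : ℝ) * Real.exp s := by
  intro s
  induction s with
  | zero => simp
  | succ k ih =>
    have hstep : ((k : ℝ) + 1) ^ k ≤ (k : ℝ) ^ k * Real.exp 1 := by
      rcases Nat.eq_zero_or_pos k with rfl | hk0
      · simpa using Real.one_le_exp (by norm_num)
      · have hkR : (0:ℝ) < k := by exact_mod_cast hk0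
        have h1 : (k : ℝ) + 1 ≤ (k : ℝ) * Real.exp (1 / k) := by
          have := Real.add_one_le_exp (1 / (k:ℝ))
          calc (k:ℝ) + 1 = (k:ℝ) * (1/k + 1) := by field_simp; ring
            _ ≤ (k:ℝ) * Real.exp (1/k) := by nlinarith [this]
        calc ((k : ℝ) + 1) ^ k ≤ ((k : ℝ) * Real.exp (1 / k)) ^ k := by
              apply pow_le_pow_left₀ (by positivity) h1
          _ = (k : ℝ) ^ k * Real.exp (1 / k) ^ k := by rw [mul_pow]
          _ = (k : ℝ) ^ k * Real.exp 1 := by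
              rw [← Real.exp_nat_mul]
              congr 1
              field_simp
    have hknn : (0:ℝ) ≤ (k:ℝ)^k := by positivity
    rw [Nat.cast_succ]
    calc ((k:ℝ) + 1) ^ (k + 1) = ((k:ℝ) + 1) * ((k:ℝ) + 1) ^ k := by
          ring
      _ ≤ ((k:ℝ) + 1) * ((k : ℝ) ^ k * Real.exp 1) := by
          apply mul_le_mul_of_nonneg_left hstep (by positivity)
      _ ≤ ((k:ℝ) + 1) * ((k.factorial : ℝ) * Real.exp k * Real.exp 1) := by
          apply mul_le_mul_of_nonneg_left _ (by positivity)
          apply mul_le_mul_of_nonneg_right ih (Real.exp_nonneg 1)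
      _ = ((k+1).factorial : ℝ) * Real.exp ((k:ℝ) + 1) := by
          rw [Nat.factorial_succ, Real.exp_add]; push_cast; ring

lemma choose_le_exp (n s : ℕ) (hs : 1 ≤ s) (hsn : s ≤ n) :
    ((n.choose s : ℕ) : ℝ) ≤ Real.exp (s * (1 + Real.log n - Real.log s)) := by
  have hsR : (0:ℝ) < s := by exact_mod_cast hs
  have hnR : (0:ℝ) < n := by exact_mod_cast lt_of_lt_of_le hs hsn
  have h1 : ((n.choose s : ℕ) : ℝ) * (s.factorial : ℝ) ≤ (n:ℝ) ^ s := by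
    have := Nat.descFactorial_le_pow n s
    have h2 : s.factorial * n.choose s = n.descFactorial s :=
      (Nat.descFactorial_eq_factorial_mul_choose n s).symm
    have h3 : n.choose s * s.factorial ≤ n ^ s := by rw [mul_comm, h2]; exact this
    exact_mod_cast h3
  have h2 : (s:ℝ) ^ s ≤ (s.factorial : ℝ) * Real.exp s := pow_self_le_fact_mul_exp s
  have hfac : (0:ℝ) < s.factorial := by exact_mod_cast Nat.factorial_pos s
  have h3 : ((n.choose s : ℕ) : ℝ) * (s:ℝ) ^ s ≤ (n:ℝ) ^ s * Real.exp s := by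
    calc ((n.choose s : ℕ) : ℝ) * (s:ℝ) ^ s ≤ ((n.choose s : ℕ) : ℝ) * ((s.factorial : ℝ) * Real.exp s) := by
          apply mul_le_mul_of_nonneg_left h2 (by positivity)
      _ = ((n.choose s : ℕ) : ℝ) * (s.factorial : ℝ) * Real.exp s := by ring
      _ ≤ (n:ℝ) ^ s * Real.exp s := mul_le_mul_of_nonneg_right h1 (Real.exp_nonneg _)
  have hexp : Real.exp (s * (1 + Real.log n - Real.log s)) = (n:ℝ)^s * Real.exp s / (s:ℝ)^s := by
    rw [show (s:ℝ) * (1 + Real.log n - Real.log s) = s * Real.log n + s - s * Real.log s by ring]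
    rw [Real.exp_sub, Real.exp_add, ← Real.log_pow, ← Real.log_pow, Real.exp_log (by positivity),
      Real.exp_log (by positivity)]
  rw [hexp, le_div_iff₀ (by positivity)]
  exact h3

-- for 2 ≤ d ≤ 7.3 we have d ≤ 4 log d
lemma small_d (d : ℝ) (h2 : 2 ≤ d) (h7 : d ≤ 7.3) : d ≤ 4 * Real.log d := by
  have hl2 : (0.6931 : ℝ) < Real.log 2 := by
    have := Real.log_two_gt_d9; linarith
  rcases le_or_gt d 5 with h5 | h5
  · -- log d ≥ log 2 + 1 - 2/d
    have hlog : Real.log 2 + 1 - 2/d ≤ Real.log d := by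
      have h := Real.log_le_sub_one_of_pos (show (0:ℝ) < 2/d by positivity)
      have : Real.log (2/d) = Real.log 2 - Real.log d := Real.log_div (by norm_num) (by linarith)
      nlinarith
    have key : d ≤ 4 * (Real.log 2 + 1 - 2/d) := by
      have hd0 : (0:ℝ) < d := by linarith
      have hu : d * (2/d) = 2 := by field_simp
      nlinarith [mul_nonneg (sub_nonneg.mpr h2) (sub_nonneg.mpr h5), hu]
    linarith
  · -- log d ≥ 2 log 2 + 1 - 4/d
    have hlog : 2 * Real.log 2 + 1 - 4/d ≤ Real.log d := by
      have h := Real.log_le_sub_one_of_pos (show (0:ℝ) < 4/d by positivity)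
      have h4 : Real.log (4/d) = Real.log 4 - Real.log d := Real.log_div (by norm_num) (by linarith)
      have h44 : Real.log 4 = 2 * Real.log 2 := by
        rw [show (4:ℝ) = 2^2 by norm_num, Real.log_pow]; push_cast; ring
      nlinarith
    have key : d ≤ 4 * (2 * Real.log 2 + 1 - 4/d) := by
      have hd0 : (0:ℝ) < d := by linarith
      have hu : d * (4/d) = 4 := by field_simp
      nlinarith [mul_nonneg (sub_nonneg.mpr h5.le) (sub_nonneg.mpr h7), hu]
    linarith

lemma log_big (d : ℝ) (h7 : 7.3 < d) : 1.9 < Real.log d := by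
  have he : Real.exp 1 < 2.7182818286 := Real.exp_one_lt_d9
  have he2 : Real.exp 2 < 7.3891 := by
    rw [show (2:ℝ) = 1 + 1 by norm_num, Real.exp_add]
    nlinarith [Real.exp_pos 1]
  have h01 : (1.1:ℝ) < Real.exp 0.1 := by
    have := Real.add_one_lt_exp (show (0.1:ℝ) ≠ 0 by norm_num)
    linarith
  have h19 : Real.exp 1.9 < 7.3 := by
    have hm : Real.exp 1.9 * Real.exp 0.1 = Real.exp 2 := by
      rw [← Real.exp_add]; norm_num
    nlinarith [Real.exp_pos 1.9, Real.exp_pos 0.1]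
  rw [show (1.9:ℝ) = Real.log (Real.exp 1.9) by rw [Real.log_exp]]
  exact Real.log_lt_log (Real.exp_pos _) (by linarith)

lemma log_38 : (1.2:ℝ) < Real.log 3.8 := by
  have he : Real.exp 1 < 2.7182818286 := Real.exp_one_lt_d9
  have h02 : Real.exp 0.2 < 1.25 := by
    have h := Real.add_one_lt_exp (show (-0.2:ℝ) ≠ 0 by norm_num)
    have hm : Real.exp 0.2 * Real.exp (-0.2) = 1 := by
      rw [← Real.exp_add]; norm_num
    nlinarith [Real.exp_pos (0.2:ℝ), Real.exp_pos (-0.2:ℝ)]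
  have h12 : Real.exp 1.2 < 3.8 := by
    have hm : Real.exp 1 * Real.exp 0.2 = Real.exp 1.2 := by
      rw [← Real.exp_add]; norm_num
    nlinarith [Real.exp_pos (0.2:ℝ), Real.exp_pos (1:ℝ)]
  rw [show (1.2:ℝ) = Real.log (Real.exp 1.2) by rw [Real.log_exp]]
  exact Real.log_lt_log (Real.exp_pos _) (by linarith)

lemma poly_ineq (d L sR nR : ℝ) (hd0 : 0 < d) (hs0 : 0 < sR) (hn8 : 8 ≤ nR)
    (hf1 : 2*nR*L ≤ sR*d) (hsn2 : sR ≤ nR/2 + 1) :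
    2*sR*(L-0.2)*(nR*nR) ≤ (d*nR/2 - 1)*(2*sR^2) := by
  have hP1 : 0 ≤ (sR*d - 2*nR*L) * (sR*nR) :=
    mul_nonneg (by linarith) (by positivity)
  have hP2 : 2*sR*sR ≤ sR*nR + 2*sR := by nlinarith
  have hP4 : 8*sR ≤ sR*nR := by nlinarith
  have hP3 : 3.2*(sR*nR) ≤ 0.4*sR*(nR*nR) := by nlinarith
  nlinarith [hP1, hP2, hP3, hP4]

lemma exists_mid {V : Type*} [DecidableEq V] (c s : ℕ) (hc : 1 ≤ c) :
    ∀ 𝒞 : Finset (Finset V), (∀ P ∈ 𝒞, P.card ≤ c) → s ≤ (𝒞.sup id).card →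
    ∃ I ⊆ 𝒞, s ≤ (I.sup id).card ∧ (I.sup id).card < s + c := by
  intro C
  induction C using Finset.strongInduction with
  | _ C ih =>
    intro hub htot
    by_cases hlt : (C.sup id).card < s + c
    · exact ⟨C, Finset.Subset.refl _, htot, hlt⟩
    · push_neg at hlt
      have hC : C.Nonempty := by
        rcases C.eq_empty_or_nonempty with rfl | h
        · exfalso
          simp only [Finset.sup_empty, Finset.bot_eq_empty, Finset.card_empty] at hlt
          omega
        · exact h
      obtain ⟨P, hP⟩ := hC
      have hins : C = insert P (C.erase P) := (Finset.insert_erase hP).symm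
      have hsub : C.sup id ⊆ P ∪ (C.erase P).sup id := by
        conv_lhs => rw [hins]
        rw [Finset.sup_insert]
        exact Finset.Subset.refl _
      have hcard : (C.sup id).card ≤ c + ((C.erase P).sup id).card := by
        calc (C.sup id).card ≤ (P ∪ (C.erase P).sup id).card := Finset.card_le_card hsub
          _ ≤ P.card + ((C.erase P).sup id).card := Finset.card_union_le _ _
          _ ≤ c + ((C.erase P).sup id).card := by
              have := hub P hP; omega
      have hrec : s ≤ ((C.erase P).sup id).card := by omega
      obtain ⟨I, hI, h1, h2⟩ := ih (C.erase P) (Finset.erase_ssubset hP)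
        (fun Q hQ => hub Q (Finset.erase_subset _ _ hQ)) hrec
      exact ⟨I, hI.trans (Finset.erase_subset _ _), h1, h2⟩

lemma integrity_lb {n s : ℕ} (hs : 1 ≤ s) (G : SimpleGraph (Fin n))
    (hP : ∀ A B : Finset (Fin n), Disjoint A B → s ≤ A.card → s ≤ B.card →
      ∃ a ∈ A, ∃ b ∈ B, G.Adj a b) (S : Finset (Fin n)) :
    n + 2 ≤ S.card + maxCompCard (G.induce ((↑S : Set (Fin n))ᶜ)) + 2 * s := by
  classical
  set W : Set (Fin n) := (↑S : Set (Fin n))ᶜ with hWdef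
  set GW := G.induce W with hGWdef
  set c := maxCompCard GW with hcdef
  have hub : ∀ cc : GW.ConnectedComponent, cc.supp.ncard ≤ c := by
    intro cc
    apply le_csSup
    · apply Set.Finite.bddAbove
      have : {m | ∃ c : GW.ConnectedComponent, m = c.supp.ncard}
          = Set.range (fun cc : GW.ConnectedComponent => cc.supp.ncard) := by
        ext m; simp [Set.range, eq_comm]
      rw [this]
      exact Set.finite_range _
    · exact ⟨cc, rfl⟩
  set T : Finset (Fin n) := Sᶜ with hTdef
  have hmemT : ∀ v : Fin n, v ∈ T ↔ v ∈ W := by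
    intro v; simp [hTdef, hWdef]
  have hTS : S.card + T.card = n := by
    rw [hTdef, Finset.card_add_card_compl, Fintype.card_fin]
  rcases T.eq_empty_or_nonempty with hTe | ⟨w, hw⟩
  · have : T.card = 0 := by rw [hTe]; rfl
    omega
  have hwW : w ∈ W := (hmemT w).mp hw
  have hc1 : 1 ≤ c := by
    have h1 : 1 ≤ ((GW.connectedComponentMk ⟨w, hwW⟩).supp).ncard := by
      rw [Nat.one_le_iff_ne_zero, ← Nat.pos_iff_ne_zero, Set.ncard_pos]
      exact ⟨⟨w, hwW⟩, rfl⟩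
    exact le_trans h1 (hub _)
  by_contra hcon
  push_neg at hcon
  have hT : 2 * s + c - 1 ≤ T.card := by omega
  set parts : Finset (Finset (Fin n)) :=
    Finset.univ.image
      (fun cc : GW.ConnectedComponent => (Subtype.val '' cc.supp).toFinset) with hpartsdef
  have hpart_sub : ∀ P ∈ parts, P ⊆ T := by
    intro P hPm
    obtain ⟨cc, _, rfl⟩ := Finset.mem_image.mp hPm
    intro v hv
    rw [Set.mem_toFinset] at hv
    obtain ⟨u, _, rfl⟩ := hv
    exact (hmemT _).mpr u.2
  have hpart_card : ∀ P ∈ parts, P.card ≤ c := by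
    intro P hPm
    obtain ⟨cc, _, rfl⟩ := Finset.mem_image.mp hPm
    rw [← Set.ncard_eq_toFinset_card', Set.ncard_image_of_injective _ Subtype.val_injective]
    exact hub cc
  have hTsup : T ⊆ parts.sup id := by
    intro v hv
    have hvW : v ∈ W := (hmemT v).mp hv
    rw [Finset.mem_sup]
    refine ⟨(Subtype.val '' (GW.connectedComponentMk ⟨v, hvW⟩).supp).toFinset,
      Finset.mem_image.mpr ⟨_, Finset.mem_univ _, rfl⟩, ?_⟩
    rw [id, Set.mem_toFinset]
    exact ⟨⟨v, hvW⟩, rfl, rfl⟩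
  have hsup_card : s ≤ (parts.sup id).card := by
    have := Finset.card_le_card hTsup
    omega
  obtain ⟨I, hIsub, hA1, hA2⟩ := exists_mid c s hc1 parts hpart_card hsup_card
  set A := I.sup id with hAdef
  have hAT : A ⊆ T := Finset.sup_le (fun P hPm => hpart_sub P (hIsub hPm))
  set B := T \ A with hBdef
  have hBcard : s ≤ B.card := by
    rw [hBdef, Finset.card_sdiff_of_subset hAT]
    have := Finset.card_le_card hAT
    omega
  obtain ⟨a, ha, b, hb, hadj⟩ := hP A B Finset.disjoint_sdiff hA1 hBcard
  have haW : a ∈ W := (hmemT a).mp (hAT ha)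
  have hbW : b ∈ W := (hmemT b).mp (Finset.mem_sdiff.mp hb).1
  have hGWadj : GW.Adj ⟨a, haW⟩ ⟨b, hbW⟩ := hadj
  have hreach : GW.connectedComponentMk ⟨a, haW⟩ = GW.connectedComponentMk ⟨b, hbW⟩ :=
    ConnectedComponent.sound hGWadj.reachable
  obtain ⟨P, hPI, haP⟩ := Finset.mem_sup.mp ha
  obtain ⟨cc, _, rfl⟩ := Finset.mem_image.mp (hIsub hPI)
  have hcc : GW.connectedComponentMk ⟨a, haW⟩ = cc := by
    rw [id] at haP
    rw [Set.mem_toFinset] at haP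
    obtain ⟨u, hu, hua⟩ := haP
    have : u = ⟨a, haW⟩ := Subtype.ext hua
    subst this
    exact (ConnectedComponent.mem_supp_iff _ _).mp hu
  have hbP : b ∈ id ((Subtype.val '' cc.supp).toFinset) := by
    rw [id, Set.mem_toFinset]
    exact ⟨⟨b, hbW⟩, (ConnectedComponent.mem_supp_iff _ _).mpr (by rw [← hreach, hcc]), rfl⟩
  have hbA : b ∈ A := Finset.mem_sup.mpr ⟨_, hPI, hbP⟩
  exact (Finset.mem_sdiff.mp hb).2 hbA

set_option maxHeartbeats 2000000 in
/-- For every `d ≥ 2` and `n ≥ d`, there exists a graph on `n` vertices with average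
degree at most `d` whose vertex integrity is at least `(1 - 4(log d)/d) n`. -/
theorem stmt12 (d : ℝ) (hd : 2 ≤ d) (n : ℕ) (hn : d ≤ (n : ℝ)) :
    ∃ G : SimpleGraph (Fin n),
      2 * (G.edgeSet.ncard : ℝ) ≤ d * n ∧
      (1 - 4 * Real.log d / d) * n ≤ (integrity G : ℝ) := by
  classical
  have hd0 : (0:ℝ) < d := by linarith
  have hn0R : (0:ℝ) < n := by linarith
  by_cases hreg : d ≤ 4 * Real.log d
  · refine ⟨⊥, ?_, ?_⟩
    · rw [SimpleGraph.edgeSet_bot, Set.ncard_empty]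
      push_cast
      norm_num
      positivity
    · have h1 : 1 - 4 * Real.log d / d ≤ 0 := by
        rw [sub_nonpos, le_div_iff₀ hd0]
        linarith
      have h2 : (1 - 4 * Real.log d / d) * n ≤ 0 :=
        mul_nonpos_of_nonpos_of_nonneg h1 (Nat.cast_nonneg n)
      exact le_trans h2 (Nat.cast_nonneg _)
  · push_neg at hreg
    have h73 : (7.3:ℝ) < d := by
      by_contra h
      push_neg at h
      exact absurd (small_d d hd h) (not_le.mpr hreg)
    set L := Real.log d with hLdef
    have hL : (1.9:ℝ) < L := log_big d h73
    have hn73 : (7.3:ℝ) < n := lt_of_lt_of_le h73 hn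
    have hn8 : 8 ≤ n := by
      have h7R : (7:ℝ) < n := by linarith
      have h7 : 7 < n := by exact_mod_cast h7R
      omega
    have hn8R : (8:ℝ) ≤ n := by exact_mod_cast hn8
    set s : ℕ := ⌊2 * (n:ℝ) * L / d⌋₊ + 1 with hsdef
    have hx0 : (0:ℝ) ≤ 2 * (n:ℝ) * L / d := by positivity
    have hs_lb : 2 * (n:ℝ) * L / d < s := by
      rw [hsdef]
      push_cast
      exact Nat.lt_floor_add_one _
    have hs_ub : (s:ℝ) ≤ 2 * (n:ℝ) * L / d + 1 := by
      rw [hsdef]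
      push_cast
      have := Nat.floor_le hx0
      linarith
    have hs1 : 1 ≤ s := by omega
    have hs0R : (0:ℝ) < s := by exact_mod_cast hs1
    have hsn2 : (s:ℝ) ≤ (n:ℝ)/2 + 1 := by
      have h1 : 2 * (n:ℝ) * L / d ≤ (n:ℝ)/2 := by
        rw [div_le_iff₀ hd0]
        nlinarith
      linarith
    have hsn : s ≤ n := by
      have : (s:ℝ) ≤ (n:ℝ) := by linarith
      exact_mod_cast this
    have hf1 : 2 * (n:ℝ) * L < s * d := by
      rw [div_lt_iff₀ hd0] at hs_lb
      linarith
    clear_value s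
    clear hsdef
    set t : ℕ := ⌊d * (n:ℝ) / 2⌋₊ with htdef
    have ht_lb : d * (n:ℝ) / 2 - 1 ≤ t := by
      have := Nat.lt_floor_add_one (d * (n:ℝ) / 2)
      rw [htdef]
      push_cast
      linarith
    have ht_ub : (t:ℝ) ≤ d * (n:ℝ) / 2 := Nat.floor_le (by positivity)
    clear_value t
    clear htdef
    set r : ℕ := 2 * s^2 with hrdef
    have hr1 : 1 ≤ r := by
      have : 1 ≤ s^2 := Nat.one_le_pow _ _ hs1
      omega
    have hrR : (r:ℝ) = 2 * (s:ℝ)^2 := by rw [hrdef]; push_cast; ring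
    clear_value r
    -- the family of forbidden pair-sets
    set F : Finset (Finset (Fin n × Fin n)) :=
      ((Finset.univ.powersetCard s ×ˢ Finset.univ.powersetCard s).filter
        (fun p : Finset (Fin n) × Finset (Fin n) => Disjoint p.1 p.2)).image
        (fun p => p.1 ×ˢ p.2 ∪ p.2 ×ˢ p.1) with hFdef
    have hFcard : F.card ≤ n.choose s * n.choose s := by
      calc F.card ≤ ((Finset.univ.powersetCard s ×ˢ Finset.univ.powersetCard s).filter
            (fun p : Finset (Fin n) × Finset (Fin n) => Disjoint p.1 p.2)).card :=
            Finset.card_image_le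
        _ ≤ (Finset.univ.powersetCard s ×ˢ (Finset.univ.powersetCard s : Finset (Finset (Fin n)))).card :=
            Finset.card_filter_le _ _
        _ = n.choose s * n.choose s := by
            rw [Finset.card_product, Finset.card_powersetCard, Finset.card_univ, Fintype.card_fin]
    have hFsizes : ∀ A ∈ F, r ≤ A.card := by
      intro A hA
      obtain ⟨p, hp, rfl⟩ := Finset.mem_image.mp hA
      rw [Finset.mem_filter, Finset.mem_product, Finset.mem_powersetCard,
        Finset.mem_powersetCard] at hp
      obtain ⟨⟨⟨-, hc1⟩, -, hc2⟩, hdisj⟩ := hp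
      have hdisj2 : Disjoint (p.1 ×ˢ p.2) (p.2 ×ˢ p.1) := by
        rw [Finset.disjoint_left]
        rintro ⟨x, y⟩ hxy1 hxy2
        rw [Finset.mem_product] at hxy1 hxy2
        exact (Finset.disjoint_left.mp hdisj hxy1.1) hxy2.1
      rw [Finset.card_union_of_disjoint hdisj2, Finset.card_product, Finset.card_product,
        hc1, hc2, hrdef]
      have : s * s + s * s = 2 * s^2 := by ring
      omega
    -- the key counting bound
    have hcardX : (Fintype.card (Fin n × Fin n) : ℝ) = (n:ℝ) * n := by
      rw [Fintype.card_prod, Fintype.card_fin]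
      push_cast
      ring
    have hfrac_nn : (0:ℝ) ≤ 1 - (r:ℝ) / ((n:ℝ) * n) := by
      rw [sub_nonneg, div_le_one (by positivity), hrR]
      nlinarith [hsn2, hn8R, hs0R]
    have hkey : 1 + Real.log n - Real.log s < L - 0.2 := by
      have hlog2L : (1.2:ℝ) < Real.log (2 * L) := by
        calc (1.2:ℝ) < Real.log 3.8 := log_38
          _ < Real.log (2 * L) := Real.log_lt_log (by norm_num) (by linarith)
      have hdivlt : (n:ℝ)/(s:ℝ) < d / (2 * L) := by
        rw [div_lt_div_iff₀ (by positivity) (by positivity)]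
        nlinarith
      have h1 : Real.log ((n:ℝ)/(s:ℝ)) < Real.log (d / (2*L)) :=
        Real.log_lt_log (by positivity) hdivlt
      rw [Real.log_div (by positivity) (by positivity),
        Real.log_div (by positivity) (by positivity)] at h1
      have h2 : Real.log d = L := rfl
      linarith
    have hmain : 2 * (s:ℝ) * (1 + Real.log n - Real.log s) < (t:ℝ) * ((r:ℝ) / ((n:ℝ)*n)) := by
      have hrhs : (d * (n:ℝ)/2 - 1) * ((r:ℝ) / ((n:ℝ)*n)) ≤ (t:ℝ) * ((r:ℝ) / ((n:ℝ)*n)) := by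
        apply mul_le_mul_of_nonneg_right ht_lb (by positivity)
      have hlhs : 2 * (s:ℝ) * (1 + Real.log n - Real.log s) < 2 * (s:ℝ) * (L - 0.2) := by
        apply mul_lt_mul_of_pos_left hkey (by positivity)
      have hpoly : 2 * (s:ℝ) * (L - 0.2) * ((n:ℝ)*n) ≤ (d * (n:ℝ)/2 - 1) * (2*(s:ℝ)^2) :=
        poly_ineq d L _ _ hd0 hs0R hn8R hf1.le hsn2
      have hmid : 2 * (s:ℝ) * (L - 0.2) ≤ (d * (n:ℝ)/2 - 1) * ((r:ℝ) / ((n:ℝ)*n)) := by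
        rw [hrR, show (d*(n:ℝ)/2-1) * (2*(s:ℝ)^2/((n:ℝ)*n)) = ((d*(n:ℝ)/2-1) * (2*(s:ℝ)^2))/((n:ℝ)*n) from by ring,
          le_div_iff₀ (show (0:ℝ) < (n:ℝ)*n by positivity)]
        exact hpoly
      linarith
    have hexp_pow : (1 - (r:ℝ)/((n:ℝ)*n))^t ≤ Real.exp (-((t:ℝ) * ((r:ℝ)/((n:ℝ)*n)))) := by
      have h1 : 1 - (r:ℝ)/((n:ℝ)*n) ≤ Real.exp (-((r:ℝ)/((n:ℝ)*n))) := by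
        have := Real.add_one_le_exp (-((r:ℝ)/((n:ℝ)*n)))
        linarith
      calc (1 - (r:ℝ)/((n:ℝ)*n))^t ≤ (Real.exp (-((r:ℝ)/((n:ℝ)*n))))^t :=
            pow_le_pow_left₀ hfrac_nn h1 t
        _ = Real.exp (-((t:ℝ) * ((r:ℝ)/((n:ℝ)*n)))) := by
            rw [← Real.exp_nat_mul]
            congr 1
            ring
    have hC2 : (F.card : ℝ) ≤ Real.exp (2*(s:ℝ)*(1 + Real.log n - Real.log s)) := by
      have hc := choose_le_exp n s hs1 hsn
      have h1 : (F.card : ℝ) ≤ ((n.choose s : ℕ):ℝ) * ((n.choose s : ℕ):ℝ) := by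
        exact_mod_cast hFcard
      calc (F.card:ℝ) ≤ ((n.choose s : ℕ):ℝ) * ((n.choose s : ℕ):ℝ) := h1
        _ ≤ Real.exp ((s:ℝ)*(1 + Real.log n - Real.log s)) *
            Real.exp ((s:ℝ)*(1 + Real.log n - Real.log s)) :=
            mul_le_mul hc hc (Nat.cast_nonneg _) (Real.exp_nonneg _)
        _ = Real.exp (2*(s:ℝ)*(1 + Real.log n - Real.log s)) := by
            rw [← Real.exp_add]
            congr 1
            ring
    have hhyp : (F.card : ℝ) * (1 - (r:ℝ)/((Fintype.card (Fin n × Fin n) : ℕ) : ℝ))^t < 1 := by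
      rw [show ((Fintype.card (Fin n × Fin n) : ℕ) : ℝ) = (n:ℝ)*n from hcardX]
      calc (F.card:ℝ) * (1 - (r:ℝ)/((n:ℝ)*n))^t
          ≤ Real.exp (2*(s:ℝ)*(1 + Real.log n - Real.log s)) *
            Real.exp (-((t:ℝ)*((r:ℝ)/((n:ℝ)*n)))) :=
            mul_le_mul hC2 hexp_pow (pow_nonneg hfrac_nn t) (Real.exp_nonneg _)
        _ = Real.exp (2*(s:ℝ)*(1 + Real.log n - Real.log s) - (t:ℝ)*((r:ℝ)/((n:ℝ)*n))) := by
            rw [← Real.exp_add]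
            congr 1
        _ < 1 := Real.exp_lt_one_iff.mpr (by linarith [hmain])
    obtain ⟨H, hHcard, hHhit⟩ := hitting r hr1 t F hFsizes hhyp
    set G : SimpleGraph (Fin n) := SimpleGraph.fromRel (fun a b => (a, b) ∈ H) with hGdef
    refine ⟨G, ?_, ?_⟩
    · have hsub : G.edgeFinset ⊆ H.image (fun p => Sym2.mk p.1 p.2) := by
        have key : ∀ a b : Fin n, s(a,b) ∈ G.edgeFinset → s(a,b) ∈ H.image (fun p => Sym2.mk p.1 p.2) := by
          intro a b he
          rw [SimpleGraph.mem_edgeFinset, SimpleGraph.mem_edgeSet, hGdef,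
            SimpleGraph.fromRel_adj] at he
          obtain ⟨hne, h | h⟩ := he
          · exact Finset.mem_image.mpr ⟨(a,b), h, rfl⟩
          · exact Finset.mem_image.mpr ⟨(b,a), h, Sym2.eq_swap⟩
        intro e
        induction e using Sym2.ind with
        | _ a b => exact key a b
      have h1 : G.edgeSet.ncard = G.edgeFinset.card := by
        rw [← Set.ncard_coe_finset, SimpleGraph.coe_edgeFinset]
      have h2 : G.edgeFinset.card ≤ H.card :=
        le_trans (Finset.card_le_card hsub) Finset.card_image_le
      have h3 : (G.edgeSet.ncard : ℝ) ≤ t := by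
        rw [h1]
        exact_mod_cast le_trans h2 hHcard
      linarith [ht_ub]
    · have hProp : ∀ A B : Finset (Fin n), Disjoint A B → s ≤ A.card → s ≤ B.card →
          ∃ a ∈ A, ∃ b ∈ B, G.Adj a b := by
        intro A B hdisj hA hB
        obtain ⟨A', hA'sub, hA'card⟩ := Finset.exists_subset_card_eq hA
        obtain ⟨B', hB'sub, hB'card⟩ := Finset.exists_subset_card_eq hB
        have hdisj' : Disjoint A' B' := hdisj.mono hA'sub hB'sub
        have hmem : (A' ×ˢ B' ∪ B' ×ˢ A') ∈ F := by
          rw [hFdef]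
          exact Finset.mem_image.mpr ⟨(A', B'), Finset.mem_filter.mpr ⟨Finset.mem_product.mpr
            ⟨Finset.mem_powersetCard.mpr ⟨Finset.subset_univ _, hA'card⟩,
             Finset.mem_powersetCard.mpr ⟨Finset.subset_univ _, hB'card⟩⟩, hdisj'⟩, rfl⟩
        obtain ⟨p, hp⟩ := hHhit _ hmem
        rw [Finset.mem_inter, Finset.mem_union] at hp
        obtain ⟨hp1 | hp1, hp2⟩ := hp
        · rw [Finset.mem_product] at hp1
          refine ⟨p.1, hA'sub hp1.1, p.2, hB'sub hp1.2, ?_⟩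
          rw [hGdef, SimpleGraph.fromRel_adj]
          exact ⟨fun h => Finset.disjoint_left.mp hdisj' hp1.1 (by rw [h]; exact hp1.2),
            Or.inl (by simpa using hp2)⟩
        · rw [Finset.mem_product] at hp1
          refine ⟨p.2, hA'sub hp1.2, p.1, hB'sub hp1.1, ?_⟩
          rw [hGdef, SimpleGraph.fromRel_adj]
          exact ⟨fun h => Finset.disjoint_left.mp hdisj' hp1.2 (by rw [h]; exact hp1.1),
            Or.inr (by simpa using hp2)⟩
      have hint := integrity_lb hs1 G hProp
      have hne : {m | ∃ S : Finset (Fin n),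
          m = S.card + maxCompCard (G.induce ((↑S : Set (Fin n))ᶜ))}.Nonempty := ⟨_, ⟨∅, rfl⟩⟩
      have hImem := Nat.sInf_mem hne
      obtain ⟨S, hSeq⟩ := hImem
      have hIeq : integrity G = S.card + maxCompCard (G.induce ((↑S : Set (Fin n))ᶜ)) := hSeq
      have hge : n + 2 ≤ integrity G + 2*s := by
        rw [hIeq]
        have := hint S
        omega
      have hgeR : (n:ℝ) + 2 ≤ (integrity G : ℝ) + 2*(s:ℝ) := by exact_mod_cast hge
      have hs_ub2 : 2*(s:ℝ) ≤ 4*L*(n:ℝ)/d + 2 := by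
        have h4 : 2*(2*(n:ℝ)*L/d + 1) = 4*L*(n:ℝ)/d + 2 := by ring
        linarith [hs_ub]
      have hfinal : (1 - 4*L/d) * (n:ℝ) = (n:ℝ) - 4*L*(n:ℝ)/d := by ring
      linarith
end

section
/- Let G be a graph on n vertices of average degree at most d, with d ≥ 2. Then there exist two disjoint sets of vertices A, B, each of size at least (n log d)/(4d), with no edges between A and B, provided n ≥ 48d. -/
open SimpleGraph

private lemma aux_choose_rec (m k : ℕ) : m * (m - 1).choose k = m.choose k * (m - k) := by
  cases m with
  | zero => simp
  | succ m' =>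
    have h1 := Nat.add_one_mul_choose_eq m' k
    have h2 := Nat.choose_succ_right_eq (m' + 1) k
    simpa using h1.trans h2

set_option maxHeartbeats 2000000

/-- Let `G` be a graph on `n` vertices of average degree at most `d`, with `d ≥ 2` and
`n ≥ 48d`. Then there are two disjoint vertex sets `A, B`, each of size at least
`n (log d)/(4d)`, with no edges between them. -/
theorem stmt13 {V : Type*} [Fintype V] (G : SimpleGraph V) (d : ℝ) (hd : 2 ≤ d)
    (hn : 48 * d ≤ (Fintype.card V : ℝ))
    (hdeg : 2 * (G.edgeSet.ncard : ℝ) ≤ d * (Fintype.card V : ℝ)) :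
    ∃ A B : Finset V, Disjoint A B ∧ (∀ a ∈ A, ∀ b ∈ B, ¬ G.Adj a b) ∧
      (Fintype.card V : ℝ) * Real.log d / (4 * d) ≤ (A.card : ℝ) ∧
      (Fintype.card V : ℝ) * Real.log d / (4 * d) ≤ (B.card : ℝ) := by
  classical
  obtain ⟨n, hncard⟩ : ∃ x : ℕ, x = Fintype.card V := ⟨_, rfl⟩
  rw [← hncard] at hn hdeg ⊢
  obtain ⟨N, hNdef⟩ : ∃ x : ℝ, x = (n : ℝ) := ⟨_, rfl⟩
  rw [← hNdef] at hn hdeg ⊢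
  obtain ⟨L, hLdef⟩ : ∃ x : ℝ, x = Real.log d := ⟨_, rfl⟩
  rw [← hLdef]
  have hd0 : (0 : ℝ) < d := by linarith
  have hL0 : (0.6931471803 : ℝ) < L := by
    rw [hLdef]
    exact lt_of_lt_of_le Real.log_two_gt_d9 (Real.log_le_log two_pos hd)
  have hLpos : 0 < L := by linarith
  have hN96 : (96 : ℝ) ≤ N := by nlinarith
  have hNpos : (0 : ℝ) < N := by linarith
  have hLd : L ≤ d - 1 := by rw [hLdef]; exact Real.log_le_sub_one_of_pos hd0
  have hL693 : (693/1000 : ℝ) < L := by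
    have := hL0; norm_num at this ⊢; linarith
  -- L ≤ d / (27/10)
  have hL27 : L ≤ d / (27/10) := by
    have he1 : ((27/10) : ℝ) < Real.exp 1 := by
      have := Real.exp_one_gt_d9; norm_num at this; linarith
    have hepos : (0 : ℝ) < Real.exp 1 := Real.exp_pos 1
    have h1 : Real.log (d / Real.exp 1) ≤ d / Real.exp 1 - 1 :=
      Real.log_le_sub_one_of_pos (by positivity)
    have h2 : Real.log (d / Real.exp 1) = L - 1 := by
      rw [Real.log_div hd0.ne' hepos.ne', Real.log_exp, hLdef]
    have h3 : d / Real.exp 1 ≤ d / (27/10) := by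
      apply div_le_div_of_nonneg_left hd0.le (by norm_num) he1.le
    linarith
  obtain ⟨τ, hτdef⟩ : ∃ x : ℝ, x = N * L / (4 * d) := ⟨_, rfl⟩
  rw [← hτdef]
  have hτpos : 0 < τ := by rw [hτdef]; positivity
  obtain ⟨k, hkdef⟩ : ∃ x : ℕ, x = ⌈τ⌉₊ := ⟨_, rfl⟩
  have hkτ : τ ≤ (k : ℝ) := by rw [hkdef]; exact Nat.le_ceil τ
  have hk1 : 1 ≤ k := by rw [hkdef]; exact Nat.one_le_ceil_iff.mpr hτpos
  have hkub : (k : ℝ) ≤ τ + 1 := by rw [hkdef]; exact (Nat.ceil_lt_add_one hτpos.le).le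
  have hτN : τ ≤ N / (54/5) := by
    rw [hτdef]
    rw [div_le_div_iff₀ (by positivity) (by norm_num)]
    nlinarith [mul_le_mul_of_nonneg_left hL27 hNpos.le]
  have hkN' : (k : ℝ) ≤ N / (54/5) + 1 := by linarith
  obtain ⟨J, hJdef⟩ : ∃ x : ℕ, x = ⌈N / 4⌉₊ := ⟨_, rfl⟩
  have hJlb : N / 4 ≤ (J : ℝ) := by rw [hJdef]; exact Nat.le_ceil _
  have hJub : (J : ℝ) ≤ N / 4 + 1 := by
    rw [hJdef]; exact (Nat.ceil_lt_add_one (by positivity)).le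
  have hJn : J ≤ n := by
    have h : (J : ℝ) ≤ (n : ℝ) := by rw [← hNdef]; linarith
    exact_mod_cast h
  have hJ1 : (1 : ℝ) ≤ (J : ℝ) := by linarith
  obtain ⟨D0, hD0def⟩ : ∃ x : ℝ, x = N - (J : ℝ) + 1 := ⟨_, rfl⟩
  have hD0lb : 3 * N / 4 ≤ D0 := by rw [hD0def]; linarith
  have hD0ub : D0 ≤ N := by rw [hD0def]; linarith
  have hD0pos : 0 < D0 := by linarith
  have hkD0 : (k : ℝ) + 1 < D0 := by
    have h : N / (54/5) + 2 < 3 * N / 4 := by nlinarith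
    linarith
  obtain ⟨ρ, hρdef⟩ : ∃ x : ℝ, x = 1 - (k : ℝ) / D0 := ⟨_, rfl⟩
  have hρpos : 0 < ρ := by
    rw [hρdef]
    have h : (k : ℝ) / D0 < 1 := by
      rw [div_lt_one hD0pos]; linarith
    linarith
  have hρ1 : ρ < 1 := by
    rw [hρdef]
    have h : 0 < (k : ℝ) / D0 := by positivity
    linarith
  have hρub : ρ ≤ 1 - L / (4 * d) := by
    have h1 : τ / N ≤ (k : ℝ) / D0 :=
      div_le_div₀ (by positivity) hkτ hD0pos hD0ub
    have h2 : τ / N = L / (4 * d) := by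
      rw [hτdef]; field_simp
    rw [h2] at h1
    rw [hρdef]; linarith
  have hρlb : 1 - (L / 3 + 1 / 36) / d ≤ ρ := by
    have h1 : (k : ℝ) / D0 ≤ (τ + 1) / (3 * N / 4) :=
      div_le_div₀ (by positivity) hkub (by positivity) hD0lb
    have h2 : (τ + 1) / (3 * N / 4) ≤ (L / 3 + 1 / 36) / d := by
      rw [div_le_div_iff₀ (by positivity) hd0]
      have hτd : τ * d = N * L / 4 := by
        rw [hτdef]; field_simp
      nlinarith [hτd, hn]
    rw [hρdef]; linarith
  -- the key counting lower bound on binomial ratios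
  have key : ∀ s : ℕ, s ≤ J → ρ ^ s * (n.choose k : ℝ) ≤ ((n - s).choose k : ℝ) := by
    intro s
    induction s with
    | zero => intro _; simp
    | succ s ih =>
      intro hs
      have hsJ : s ≤ J := Nat.le_of_succ_le hs
      have h1 := ih hsJ
      have hsn : s ≤ n := le_trans hsJ hJn
      have hmcast : ((n - s : ℕ) : ℝ) = N - s := by
        rw [hNdef]; push_cast [Nat.cast_sub hsn]; ring
      have hsJ' : (s : ℝ) + 1 ≤ (J : ℝ) := by exact_mod_cast hs
      have hmD0 : D0 ≤ ((n - s : ℕ) : ℝ) := by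
        rw [hmcast, hD0def]; linarith
      have hkm : k ≤ n - s := by
        have : (k : ℝ) ≤ ((n - s : ℕ) : ℝ) := by linarith
        exact_mod_cast this
      have hmpos : 0 < ((n - s : ℕ) : ℝ) := lt_of_lt_of_le hD0pos hmD0
      -- identity : m * C(m-1,k) = C(m,k) * (m-k)
      have hid : ((n - s : ℕ) : ℝ) * (((n - s) - 1).choose k : ℝ)
          = ((n - s).choose k : ℝ) * (((n - s : ℕ) : ℝ) - (k : ℝ)) := by
        rw [← Nat.cast_mul, aux_choose_rec (n - s) k, Nat.cast_mul, Nat.cast_sub hkm]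
      have hρm : ρ * ((n - s).choose k : ℝ) ≤ (((n - s) - 1).choose k : ℝ) := by
        have hρ' : ρ ≤ (((n - s : ℕ) : ℝ) - (k : ℝ)) / ((n - s : ℕ) : ℝ) := by
          rw [hρdef]
          have hdiv : (k : ℝ) / ((n - s : ℕ) : ℝ) ≤ (k : ℝ) / D0 :=
            div_le_div_of_nonneg_left (by positivity) hD0pos hmD0
          have hne0 : ((n - s : ℕ) : ℝ) ≠ 0 := ne_of_gt hmpos
          have heq : (((n - s : ℕ) : ℝ) - (k : ℝ)) / ((n - s : ℕ) : ℝ)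
              = 1 - (k : ℝ) / ((n - s : ℕ) : ℝ) := by
            rw [sub_div, div_self hne0]
          rw [heq]; linarith
        have hCpos : (0 : ℝ) ≤ ((n - s).choose k : ℝ) := by positivity
        have h3 : ρ * ((n - s).choose k : ℝ)
            ≤ ((((n - s : ℕ) : ℝ) - (k : ℝ)) / ((n - s : ℕ) : ℝ)) * ((n - s).choose k : ℝ) :=
          mul_le_mul_of_nonneg_right hρ' hCpos
        have hne0 : ((n - s : ℕ) : ℝ) ≠ 0 := ne_of_gt hmpos
        have h4 : ((((n - s : ℕ) : ℝ) - (k : ℝ)) / ((n - s : ℕ) : ℝ)) * ((n - s).choose k : ℝ)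
            = (((n - s) - 1).choose k : ℝ) := by
          rw [div_mul_eq_mul_div, div_eq_iff hne0, mul_comm (((n - s : ℕ) : ℝ) - (k : ℝ))]
          linarith [hid]
        linarith
      have hstep : n - (s + 1) = (n - s) - 1 := by omega
      calc ρ ^ (s + 1) * (n.choose k : ℝ) = ρ * (ρ ^ s * (n.choose k : ℝ)) := by ring
        _ ≤ ρ * ((n - s).choose k : ℝ) := mul_le_mul_of_nonneg_left h1 hρpos.le
        _ ≤ (((n - s) - 1).choose k : ℝ) := hρm
        _ = ((n - (s + 1)).choose k : ℝ) := by rw [hstep]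
  -- per-vertex bound
  have pv : ∀ j : ℕ, (n.choose k : ℝ) * (ρ ^ ((j : ℝ) + 1) - ρ ^ ((J : ℕ) : ℝ))
      ≤ ((n - 1 - j).choose k : ℝ) := by
    intro j
    by_cases hj : j + 1 ≤ J
    · have h1 := key (j + 1) hj
      have hcast : ρ ^ ((j : ℝ) + 1) = ρ ^ (j + 1 : ℕ) := by
        rw [← Real.rpow_natCast ρ (j + 1)]; push_cast; ring_nf
      have h2 : (0 : ℝ) ≤ (n.choose k : ℝ) * ρ ^ ((J : ℕ) : ℝ) := by
        have : (0:ℝ) ≤ ρ ^ ((J : ℕ) : ℝ) := Real.rpow_nonneg hρpos.le _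
        positivity
      have h3 : n - 1 - j = n - (j + 1) := by omega
      rw [h3, mul_sub, hcast]
      nlinarith [h1, h2]
    · have hJj : ((J : ℕ) : ℝ) ≤ (j : ℝ) + 1 := by
        have : J ≤ j + 1 := by omega
        exact_mod_cast this
      have h1 : ρ ^ ((j : ℝ) + 1) ≤ ρ ^ ((J : ℕ) : ℝ) :=
        Real.rpow_le_rpow_of_exponent_ge hρpos hρ1.le hJj
      have h2 : (n.choose k : ℝ) * (ρ ^ ((j : ℝ) + 1) - ρ ^ ((J : ℕ) : ℝ)) ≤ 0 :=
        mul_nonpos_of_nonneg_of_nonpos (by positivity) (by linarith)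
      have h3 : (0 : ℝ) ≤ ((n - 1 - j).choose k : ℝ) := by positivity
      linarith
  -- degree sum bound
  have hdsum : (∑ v : V, (G.degree v : ℝ)) ≤ d * N := by
    have h1 : ∑ v : V, G.degree v = 2 * G.edgeFinset.card :=
      G.sum_degrees_eq_twice_card_edges
    have h2 : G.edgeSet.ncard = G.edgeFinset.card := by
      rw [Set.ncard_eq_toFinset_card']; rfl
    have h3 : ((∑ v : V, G.degree v : ℕ) : ℝ) = ∑ v : V, (G.degree v : ℝ) :=
      Nat.cast_sum _ _
    rw [← h3, h1]
    push_cast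
    rw [h2] at hdeg
    push_cast at hdeg
    linarith
  clear hdeg
  -- Jensen-type bound
  have hjensen : N * (ρ ^ (d + 1) - ρ ^ ((J : ℕ) : ℝ))
      ≤ ∑ v : V, (ρ ^ ((G.degree v : ℝ) + 1) - ρ ^ ((J : ℕ) : ℝ)) := by
    obtain ⟨a, hadef⟩ : ∃ x : ℝ, x = Real.log ρ := ⟨_, rfl⟩
    have ha0 : a < 0 := by rw [hadef]; exact Real.log_neg hρpos hρ1
    have hrv : ∀ v : V, Real.exp (a * (d + 1)) * (1 + a * ((G.degree v : ℝ) - d))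
        ≤ ρ ^ ((G.degree v : ℝ) + 1) := by
      intro v
      rw [Real.rpow_def_of_pos hρpos, ← hadef]
      have h1 : 1 + a * ((G.degree v : ℝ) - d) ≤ Real.exp (a * ((G.degree v : ℝ) - d)) := by
        have := Real.add_one_le_exp (a * ((G.degree v : ℝ) - d))
        linarith
      have h2 := mul_le_mul_of_nonneg_left h1 (Real.exp_pos (a * (d + 1))).le
      calc Real.exp (a * (d + 1)) * (1 + a * ((G.degree v : ℝ) - d))
          ≤ Real.exp (a * (d + 1)) * Real.exp (a * ((G.degree v : ℝ) - d)) := h2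
        _ = Real.exp (a * ((G.degree v : ℝ) + 1)) := by
            rw [← Real.exp_add]; ring_nf
    have hsum : ∑ v : V, Real.exp (a * (d + 1)) * (1 + a * ((G.degree v : ℝ) - d))
        = Real.exp (a * (d + 1)) * (N + a * ((∑ v : V, (G.degree v : ℝ)) - N * d)) := by
      rw [← Finset.mul_sum]
      congr 1
      rw [Finset.sum_add_distrib, Finset.sum_const, Finset.card_univ, ← Finset.mul_sum,
        Finset.sum_sub_distrib, Finset.sum_const, Finset.card_univ, ← hncard]
      rw [hNdef]
      push_cast
      ring
    have hnonneg : 0 ≤ a * ((∑ v : V, (G.degree v : ℝ)) - N * d) := by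
      have h := mul_nonneg (neg_nonneg.mpr ha0.le) (sub_nonneg.mpr hdsum)
      nlinarith [h]
    have h4 : N * ρ ^ (d + 1) ≤ ∑ v : V, ρ ^ ((G.degree v : ℝ) + 1) := by
      have h5 : ∑ v : V, Real.exp (a * (d + 1)) * (1 + a * ((G.degree v : ℝ) - d))
          ≤ ∑ v : V, ρ ^ ((G.degree v : ℝ) + 1) := Finset.sum_le_sum (fun v _ => hrv v)
      rw [hsum] at h5
      have h6 : ρ ^ (d + 1) = Real.exp (a * (d + 1)) := by
        rw [Real.rpow_def_of_pos hρpos, hadef]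
      rw [h6]
      nlinarith [Real.exp_pos (a * (d + 1))]
    rw [Finset.sum_sub_distrib, Finset.sum_const, Finset.card_univ, ← hncard]
    rw [nsmul_eq_mul, ← hNdef]
    linarith
  -- double counting
  obtain ⟨BB, hBBdef⟩ : ∃ F : Finset V → Finset V,
      F = fun A => Finset.univ.filter (fun v => v ∉ A ∧ ∀ a ∈ A, ¬ G.Adj a v) := ⟨_, rfl⟩
  have count : ∑ A ∈ Finset.powersetCard k (Finset.univ : Finset V), ((BB A).card)
      = ∑ v : V, (n - 1 - G.degree v).choose k := by
    have h1 : ∀ A : Finset V, (BB A).card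
        = ∑ v : V, (if v ∉ A ∧ ∀ a ∈ A, ¬ G.Adj a v then 1 else 0) := by
      intro A
      rw [hBBdef]
      exact Finset.card_filter _ _
    rw [Finset.sum_congr rfl (fun A _ => h1 A), Finset.sum_comm]
    apply Finset.sum_congr rfl
    intro v _
    have h2 : ∑ A ∈ Finset.powersetCard k (Finset.univ : Finset V),
        (if v ∉ A ∧ ∀ a ∈ A, ¬ G.Adj a v then 1 else 0)
        = ((Finset.powersetCard k (Finset.univ : Finset V)).filter
            (fun A => v ∉ A ∧ ∀ a ∈ A, ¬ G.Adj a v)).card :=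
      (Finset.card_filter _ _).symm
    rw [h2]
    have h3 : (Finset.powersetCard k (Finset.univ : Finset V)).filter
        (fun A => v ∉ A ∧ ∀ a ∈ A, ¬ G.Adj a v)
        = Finset.powersetCard k (Finset.univ \ insert v (G.neighborFinset v)) := by
      ext A
      simp only [Finset.mem_filter, Finset.mem_powersetCard]
      constructor
      · rintro ⟨⟨_, hcard⟩, hvA, hadj⟩
        refine ⟨?_, hcard⟩
        intro a haA
        simp only [Finset.mem_sdiff, Finset.mem_univ, Finset.mem_insert, true_and,
          SimpleGraph.mem_neighborFinset]
        push_neg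
        constructor
        · rintro rfl; exact hvA haA
        · intro hadj'; exact hadj a haA (G.adj_symm hadj')
      · rintro ⟨hsub, hcard⟩
        refine ⟨⟨Finset.subset_univ A, hcard⟩, ?_, ?_⟩
        · intro hvA
          have := hsub hvA
          simp at this
        · intro a haA hadj'
          have := hsub haA
          simp only [Finset.mem_sdiff, Finset.mem_univ, Finset.mem_insert, true_and,
            SimpleGraph.mem_neighborFinset] at this
          push_neg at this
          exact this.2 (G.adj_symm hadj')
    rw [h3, Finset.card_powersetCard]
    congr 1
    have hsub : insert v (G.neighborFinset v) ⊆ Finset.univ := Finset.subset_univ _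
    rw [Finset.card_sdiff_of_subset hsub, Finset.card_insert_of_notMem
      (G.notMem_neighborFinset_self v), Finset.card_univ, SimpleGraph.card_neighborFinset_eq_degree]
    omega
  -- combine: total sum lower bound
  have hkn : k ≤ n := by
    have : (k : ℝ) ≤ (n : ℝ) := by rw [← hNdef]; linarith
    exact_mod_cast this
  have hchpos : 0 < n.choose k := Nat.choose_pos hkn
  obtain ⟨c0, hc0def⟩ : ∃ x : ℝ, x = N * (ρ ^ (d + 1) - ρ ^ ((J : ℕ) : ℝ)) := ⟨_, rfl⟩
  have htotal : (n.choose k : ℝ) * c0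
      ≤ ∑ A ∈ Finset.powersetCard k (Finset.univ : Finset V), ((BB A).card : ℝ) := by
    have h1 : ∑ v : V, (n.choose k : ℝ) * (ρ ^ ((G.degree v : ℝ) + 1) - ρ ^ ((J : ℕ) : ℝ))
        ≤ ∑ v : V, ((n - 1 - G.degree v).choose k : ℝ) :=
      Finset.sum_le_sum (fun v _ => pv (G.degree v))
    have h2 : (n.choose k : ℝ) * c0
        ≤ ∑ v : V, (n.choose k : ℝ) * (ρ ^ ((G.degree v : ℝ) + 1) - ρ ^ ((J : ℕ) : ℝ)) := by
      rw [← Finset.mul_sum, hc0def]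
      calc (n.choose k : ℝ) * (N * (ρ ^ (d + 1) - ρ ^ ((J : ℕ) : ℝ)))
          ≤ (n.choose k : ℝ)
            * ∑ v : V, (ρ ^ ((G.degree v : ℝ) + 1) - ρ ^ ((J : ℕ) : ℝ)) :=
            mul_le_mul_of_nonneg_left hjensen (by positivity)
        _ = _ := rfl
    have h3 : ∑ v : V, ((n - 1 - G.degree v).choose k : ℝ)
        = ∑ A ∈ Finset.powersetCard k (Finset.univ : Finset V), ((BB A).card : ℝ) := by
      rw [← Nat.cast_sum, ← Nat.cast_sum, count]
    linarith
  -- analytic bound : c0 ≥ τ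
  have hanal : τ ≤ c0 := by
    have hAρ : ρ ^ ((J : ℕ) : ℝ) ≤ 3 * L / (8 * d) := by
      have h1 : ρ ≤ Real.exp (-(L / (4 * d))) := by
        have := Real.add_one_le_exp (-(L / (4 * d)))
        linarith [hρub]
      have h2 : ρ ^ ((J : ℕ) : ℝ) ≤ (Real.exp (-(L / (4 * d)))) ^ ((J : ℕ) : ℝ) :=
        Real.rpow_le_rpow hρpos.le h1 (by positivity)
      have h3 : (Real.exp (-(L / (4 * d)))) ^ ((J : ℕ) : ℝ)
          = Real.exp (-(L / (4 * d)) * (J : ℝ)) := (Real.exp_mul _ _).symm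
      have h4 : -(L / (4 * d)) * (J : ℝ) ≤ -(3 * L) := by
        have hJ12 : 12 * d ≤ (J : ℝ) := by linarith [hJlb, hn]
        rw [neg_mul, neg_le_neg_iff]
        rw [div_mul_eq_mul_div, le_div_iff₀ (by positivity)]
        nlinarith
      have h5 : Real.exp (-(L / (4 * d)) * (J : ℝ)) ≤ Real.exp (-(3 * L)) :=
        Real.exp_le_exp.mpr h4
      have h6 : Real.exp (-(3 * L)) = (1 / d) ^ (3 : ℕ) := by
        have : -(3 * L) = (3 : ℕ) * (-L) := by push_cast; ring
        rw [this, Real.exp_nat_mul, Real.exp_neg, hLdef, Real.exp_log hd0]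
        norm_num
      have h7 : ((1 : ℝ) / d) ^ (3 : ℕ) ≤ 3 * L / (8 * d) := by
        rw [le_div_iff₀ (show (0:ℝ) < 8 * d by positivity)]
        have he : ((1:ℝ) / d) ^ (3:ℕ) * (8 * d) = 8 / d ^ 2 := by
          field_simp
        rw [he, div_le_iff₀ (show (0:ℝ) < d ^ 2 by positivity)]
        nlinarith [hL693, hd, sq_nonneg (d - 2)]
      calc ρ ^ ((J : ℕ) : ℝ) ≤ (Real.exp (-(L / (4 * d)))) ^ ((J : ℕ) : ℝ) := h2
        _ = Real.exp (-(L / (4 * d)) * (J : ℝ)) := h3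
        _ ≤ Real.exp (-(3 * L)) := h5
        _ = (1 / d) ^ (3 : ℕ) := h6
        _ ≤ 3 * L / (8 * d) := h7
    have hBρ : 5 * L / (8 * d) ≤ ρ ^ (d + 1) := by
      obtain ⟨c, hcdef⟩ : ∃ x : ℝ, x = L / 3 + 1 / 36 := ⟨_, rfl⟩
      have hc0' : 0 < c := by rw [hcdef]; linarith
      have hcd : c < d := by rw [hcdef]; nlinarith
      have hdc : 0 < d - c := by linarith
      have hρ₀pos : (0 : ℝ) < 1 - c / d := by
        have : c / d < 1 := by rw [div_lt_one hd0]; linarith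
        linarith
      have step1 : (1 - c / d) ^ (d + 1) ≤ ρ ^ (d + 1) :=
        Real.rpow_le_rpow hρ₀pos.le (by rw [hcdef]; exact hρlb) (by linarith)
      have step2 : (1 - c / d) ^ (d + 1) = Real.exp (Real.log (1 - c / d) * (d + 1)) :=
        Real.rpow_def_of_pos hρ₀pos _
      have step3 : -(c / (d - c)) ≤ Real.log (1 - c / d) := by
        have h1 : Real.log (d / (d - c)) ≤ d / (d - c) - 1 :=
          Real.log_le_sub_one_of_pos (by positivity)
        have h2 : Real.log (d / (d - c)) = -Real.log (1 - c / d) := by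
          rw [← Real.log_inv]
          congr 1
          field_simp
        have h3 : d / (d - c) - 1 = c / (d - c) := by field_simp; ring
        rw [h2, h3] at h1
        linarith
      -- key polynomial inequality
      have hM : Real.log L ≤ 2 * L / 3 - 1 / 2 := by
        have h1 : Real.log (2 * L / 3) ≤ 2 * L / 3 - 1 :=
          Real.log_le_sub_one_of_pos (by positivity)
        have h2 : Real.log (2 * L / 3) = Real.log L + Real.log (2 / 3) := by
          rw [show 2 * L / 3 = L * (2 / 3) by ring, Real.log_mul hLpos.ne' (by norm_num)]
        have h3 : Real.log (3 / 2) ≤ 1 / 2 := by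
          have := Real.log_le_sub_one_of_pos (show (0:ℝ) < 3/2 by norm_num)
          linarith
        have h4 : Real.log (2 / 3) = -Real.log (3 / 2) := by
          rw [← Real.log_inv]; norm_num
        rw [h2, h4] at h1
        linarith
      have hd4 : (1 + L / 4) ^ (4 : ℕ) ≤ d := by
        have h1 : Real.exp L = d := by rw [hLdef]; exact Real.exp_log hd0
        have h2 : (Real.exp (L / 4)) ^ (4 : ℕ) = Real.exp L := by
          rw [← Real.exp_nat_mul]
          congr 1
          push_cast
          ring
        have h3 : 1 + L / 4 ≤ Real.exp (L / 4) := by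
          have := Real.add_one_le_exp (L / 4); linarith
        have h4 : (1 + L / 4) ^ (4 : ℕ) ≤ (Real.exp (L / 4)) ^ (4 : ℕ) :=
          pow_le_pow_left₀ (by linarith) h3 4
        rw [h2] at h4
        linarith [h4]
      have hd4' : 1 + L + (3/8) * L ^ 2 + (1/16) * L ^ 3 + (1/256) * L ^ 4 ≤ d := by
        have hexp : (1 + L / 4) ^ (4 : ℕ)
            = 1 + L + (3/8) * L ^ 2 + (1/16) * L ^ 3 + (1/256) * L ^ 4 := by ring
        rw [hexp] at hd4
        exact hd4
      have hq : (L / 3 + 1 / 36) * (L / 3 + 15 / 8) ≤ 61 / 72 * d := by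
        linarith only [hd4', sq_nonneg L, pow_nonneg hLpos.le 3, pow_nonneg hLpos.le 4,
          hLpos.le]
      have hmain : c * (d + 1) ≤ (L / 3 + 7 / 8) * (d - c) := by
        rw [hcdef]
        linarith only [hq]
      have step5 : c * (d + 1) ≤ (L + 3 / 8 - Real.log L) * (d - c) := by
        have h78 : L / 3 + 7 / 8 ≤ L + 3 / 8 - Real.log L := by linarith
        calc c * (d + 1) ≤ (L / 3 + 7 / 8) * (d - c) := hmain
          _ ≤ (L + 3 / 8 - Real.log L) * (d - c) :=
            mul_le_mul_of_nonneg_right h78 hdc.le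
      have step6 : Real.log (5 * L / (8 * d)) ≤ -(c * (d + 1) / (d - c)) := by
        have h1 : Real.log (5 * L / (8 * d))
            = Real.log 5 + Real.log L - (Real.log 8 + Real.log d) := by
          rw [Real.log_div (by positivity) (by positivity), Real.log_mul (by norm_num) hLpos.ne',
            Real.log_mul (by norm_num) hd0.ne']
        have h2 : (3 : ℝ) / 8 ≤ Real.log 8 - Real.log 5 := by
          have ha : Real.log (5 / 8) ≤ 5 / 8 - 1 :=
            Real.log_le_sub_one_of_pos (by norm_num)
          have hb : Real.log (5 / 8) = Real.log 5 - Real.log 8 :=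
            Real.log_div (by norm_num) (by norm_num)
          rw [hb] at ha
          linarith
        have h3 : c * (d + 1) / (d - c) ≤ L + 3 / 8 - Real.log L := by
          rw [div_le_iff₀ hdc]
          linarith [step5]
        rw [h1, ← hLdef]
        linarith
      have step7 : 5 * L / (8 * d) ≤ Real.exp (Real.log (1 - c / d) * (d + 1)) := by
        have h0 : 5 * L / (8 * d) = Real.exp (Real.log (5 * L / (8 * d))) :=
          (Real.exp_log (by positivity)).symm
        rw [h0]
        apply Real.exp_le_exp.mpr
        have h1 : -(c * (d + 1) / (d - c)) ≤ Real.log (1 - c / d) * (d + 1) := by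
          have := mul_le_mul_of_nonneg_right step3 (show (0:ℝ) ≤ d + 1 by linarith)
          calc -(c * (d + 1) / (d - c)) = (-(c / (d - c))) * (d + 1) := by ring
            _ ≤ Real.log (1 - c / d) * (d + 1) := this
        linarith [step6, h1]
      calc 5 * L / (8 * d) ≤ Real.exp (Real.log (1 - c / d) * (d + 1)) := step7
        _ = (1 - c / d) ^ (d + 1) := step2.symm
        _ ≤ ρ ^ (d + 1) := step1
    rw [hc0def, hτdef]
    have h1 : L / (4 * d) ≤ ρ ^ (d + 1) - ρ ^ ((J : ℕ) : ℝ) := by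
      have : 5 * L / (8 * d) - 3 * L / (8 * d) = L / (4 * d) := by
        field_simp; ring
      linarith [hAρ, hBρ]
    calc N * L / (4 * d) = N * (L / (4 * d)) := by ring
      _ ≤ N * (ρ ^ (d + 1) - ρ ^ ((J : ℕ) : ℝ)) := mul_le_mul_of_nonneg_left h1 hNpos.le
  -- pigeonhole : find a good A
  have hne : (Finset.powersetCard k (Finset.univ : Finset V)).Nonempty := by
    rw [← Finset.card_pos, Finset.card_powersetCard, Finset.card_univ, ← hncard]
    exact hchpos
  have hexists : ∃ A ∈ Finset.powersetCard k (Finset.univ : Finset V),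
      c0 ≤ ((BB A).card : ℝ) := by
    by_contra hcon
    push_neg at hcon
    have hlt : ∑ A ∈ Finset.powersetCard k (Finset.univ : Finset V), ((BB A).card : ℝ)
        < ∑ A ∈ Finset.powersetCard k (Finset.univ : Finset V), c0 :=
      Finset.sum_lt_sum_of_nonempty hne hcon
    rw [Finset.sum_const, Finset.card_powersetCard, Finset.card_univ, ← hncard,
      nsmul_eq_mul] at hlt
    linarith [htotal]
  obtain ⟨A, hA𝒜, hAgood⟩ := hexists
  rw [Finset.mem_powersetCard] at hA𝒜
  obtain ⟨-, hAcard⟩ := hA𝒜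
  refine ⟨A, BB A, ?_, ?_, ?_, ?_⟩
  · rw [Finset.disjoint_left]
    intro a haA haB
    rw [hBBdef, Finset.mem_filter] at haB
    exact haB.2.1 haA
  · intro a haA b hbB
    rw [hBBdef, Finset.mem_filter] at hbB
    exact hbB.2.2 a haA
  · rw [hAcard]
    exact hkτ
  · linarith [hanal, hAgood]
end
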